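/- arXiv:2510.03676 — 6 statements merged into one kernel-verified Lean document; each statement's English description precedes it below -/
import Mathlib

section
/- Let d ≥ 2 and let 𝒢 be a set of bijections ℝ^d → ℝ^d that is closed under composition and under taking inverses. Suppose (C-UAP): for every orientation-preserving diffeomorphism g : ℝ^d → ℝ^d, every compact Ω ⊆ ℝ^d and every ε > 0 there exists φ ∈ 𝒢 with ‖g(x) − φ(x)‖ ≤ ε for all x ∈ Ω. Suppose also (local UIP): for every N ∈ ℕ there exist pairwise distinct points z₁,…,z_N ∈ ℝ^d and δ > 0 such that for all pairwise distinct z′₁,…,z′_N ∈ ℝ^d with ‖z′ᵢ − zᵢ‖ < δ for each i, there exists φ ∈ 𝒢 with φ(zᵢ) = z′ᵢ for all i. Then 𝒢 has the universal interpolation property: for every N ∈ ℕ and all pairwise distinct x₁,…,x_N ∈ ℝ^d and pairwise distinct y₁,…,y_N ∈ ℝ^d, there exists φ ∈ 𝒢 with φ(xᵢ) = yᵢ for all i. -/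
/-!
Shears `p ↦ p + H (π p)` with `π ∘ H = 0` are orientation-preserving diffeomorphisms: their
Jacobian `1 + A` has `A * A = 0`. Choosing `π` among the moment functionals
`p ↦ ∑ μ, t ^ μ * p μ` (which separate any finite set for all but finitely many `t`) and `H` by
Lagrange interpolation, two shears move any injective `N`-tuple to `(i • e₁)ᵢ`, so orientation-
preserving diffeomorphisms act transitively on injective `N`-tuples when `d ≥ 2`. By C-UAP some
`ψ ∈ 𝒢` then carries `x` into the `δ`-neighbourhood of the tuple `z` of the local UIP, a further
element of `𝒢` corrects `ψ ∘ x` onto `z` exactly, and `x` and `y` are joined through `z`.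
-/

open scoped NNReal

noncomputable section

/-- `Euc d` is the Euclidean space `ℝ^d`. -/
abbrev Euc (d : ℕ) := EuclideanSpace ℝ (Fin d)

/-- An orientation-preserving diffeomorphism of `ℝ^d`: a bijection such that it and its inverse
are continuously differentiable, with everywhere positive Jacobian determinant. -/
def OrientationPreservingDiffeo {d : ℕ} (g : Euc d → Euc d) : Prop :=
  Function.Bijective g ∧
  ∃ ginv : Euc d → Euc d,
    Function.LeftInverse ginv g ∧ Function.RightInverse ginv g ∧
    ContDiff ℝ 1 g ∧ ContDiff ℝ 1 ginv ∧
    ∀ x, 0 < (fderiv ℝ g x).det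

theorem LinearMap.det_one_add_pos_of_mul_self_eq_zero {E : Type*} [AddCommGroup E]
    [Module ℝ E] {A : Module.End ℝ E} (hA : A * A = 0) : 0 < LinearMap.det (1 + A) := by
  have hsq : 1 + A = (1 + (2⁻¹ : ℝ) • A) * (1 + (2⁻¹ : ℝ) • A) := by
    simp only [mul_add, add_mul, one_mul, mul_one, smul_mul_smul_comm, hA, smul_zero]
    module
  have hunit : (1 + (2⁻¹ : ℝ) • A) * (1 - (2⁻¹ : ℝ) • A) = 1 := by
    simp only [mul_sub, add_mul, one_mul, mul_one, smul_mul_smul_comm, hA, smul_zero]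
    module
  have hne : LinearMap.det (1 + (2⁻¹ : ℝ) • A) ≠ 0 := by
    intro h
    simpa [h] using congrArg LinearMap.det hunit
  rw [hsq, map_mul]
  exact mul_self_pos.2 hne

theorem ContinuousLinearMap.det_comp {R E : Type*} [CommRing R] [TopologicalSpace E]
    [AddCommGroup E] [Module R E] (A B : E →L[R] E) : (A.comp B).det = A.det * B.det :=
  LinearMap.det_comp _ _

namespace OrientationPreservingDiffeo

variable {d : ℕ} {g f : Euc d → Euc d}

theorem comp (hg : OrientationPreservingDiffeo g) (hf : OrientationPreservingDiffeo f) :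
    OrientationPreservingDiffeo (g ∘ f) := by
  obtain ⟨hg_bij, g', hg'g, hgg', hg_C1, hg'_C1, hg_det⟩ := hg
  obtain ⟨hf_bij, f', hf'f, hff', hf_C1, hf'_C1, hf_det⟩ := hf
  refine ⟨hg_bij.comp hf_bij, f' ∘ g', hg'g.comp hf'f, hgg'.comp hff', hg_C1.comp hf_C1,
    hf'_C1.comp hg'_C1, fun x => ?_⟩
  rw [fderiv_comp x (hg_C1.differentiable one_ne_zero _) (hf_C1.differentiable one_ne_zero _),
    ContinuousLinearMap.det_comp]
  exact mul_pos (hg_det _) (hf_det _)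

theorem exists_leftInverse (hg : OrientationPreservingDiffeo g) :
    ∃ g', OrientationPreservingDiffeo g' ∧ Function.LeftInverse g' g := by
  obtain ⟨hg_bij, g', hg'g, hgg', hg_C1, hg'_C1, hg_det⟩ := hg
  refine ⟨g', ⟨⟨hgg'.injective, hg'g.surjective⟩, g, hgg', hg'g, hg'_C1, hg_C1, fun y => ?_⟩, hg'g⟩
  have hchain := fderiv_comp (g' y) (hg'_C1.differentiable one_ne_zero (g (g' y)))
    (hg_C1.differentiable one_ne_zero (g' y))
  rw [hg'g.comp_eq_id, fderiv_id, hgg' y] at hchain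
  have hdet := congrArg ContinuousLinearMap.det hchain
  rw [ContinuousLinearMap.det_comp, ContinuousLinearMap.det, ContinuousLinearMap.coe_id,
    LinearMap.det_id] at hdet
  exact pos_of_mul_pos_left (hdet ▸ one_pos) (hg_det (g' y)).le

end OrientationPreservingDiffeo

theorem orientationPreservingDiffeo_shear {d : ℕ} {F : Type*} [NormedAddCommGroup F]
    [NormedSpace ℝ F] (π : Euc d →L[ℝ] F) {H : F → Euc d} (hH : ContDiff ℝ 1 H)
    (hπH : ∀ s, π (H s) = 0) : OrientationPreservingDiffeo fun p => p + H (π p) := by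
  have hleft : Function.LeftInverse (fun p => p - H (π p)) (fun p => p + H (π p)) := by
    intro p; simp [map_add, hπH]
  have hright : Function.RightInverse (fun p => p - H (π p)) (fun p => p + H (π p)) := by
    intro p; simp [map_sub, hπH]
  refine ⟨⟨hleft.injective, hright.surjective⟩, _, hleft, hright,
    contDiff_id.add (hH.comp π.contDiff), contDiff_id.sub (hH.comp π.contDiff), fun x => ?_⟩
  have hH' : ∀ s, HasFDerivAt H (fderiv ℝ H s) s :=
    fun s => (hH.differentiable one_ne_zero s).hasFDerivAt
  have hπH' : π.comp (fderiv ℝ H (π x)) = 0 :=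
    (π.hasFDerivAt.comp _ (hH' (π x))).unique
      (by simpa [Function.comp_def, hπH] using hasFDerivAt_const (0 : F) (π x))
  set A := (fderiv ℝ H (π x)).comp π
  have hA : (A : Module.End ℝ (Euc d)) * A = 0 := by
    ext p
    simp [A, ← ContinuousLinearMap.comp_apply π, hπH']
  have hD : HasFDerivAt (fun p => p + H (π p)) (ContinuousLinearMap.id ℝ _ + A) x :=
    (hasFDerivAt_id x).add ((hH' (π x)).comp x π.hasFDerivAt)
  rw [hD.fderiv]
  exact LinearMap.det_one_add_pos_of_mul_self_eq_zero hA

theorem exists_contDiff_interpolation {ι E : Type*} [Fintype ι] [NormedAddCommGroup E]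
    [NormedSpace ℝ E] {t : ι → ℝ} (ht : Function.Injective t) (v : ι → E) (n : WithTop ℕ∞) :
    ∃ H : ℝ → E, ContDiff ℝ n H ∧ (∀ i, H (t i) = v i) ∧
      ∀ s, H s ∈ Submodule.span ℝ (Set.range v) := by
  classical
  refine ⟨fun s => ∑ i, (Lagrange.basis Finset.univ t i).eval s • v i,
    ContDiff.sum fun i _ => ?_, fun j => ?_, fun s => ?_⟩
  · have hp : ContDiff ℝ n fun s => (Lagrange.basis Finset.univ t i).eval s := by
      simpa only [Polynomial.coe_aeval_eq_eval] using
        (Lagrange.basis Finset.univ t i).contDiff_aeval (𝕜 := ℝ) n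
    exact hp.smul contDiff_const
  · dsimp only
    rw [Finset.sum_eq_single j (fun i _ hij => by
      rw [Lagrange.eval_basis_of_ne hij (Finset.mem_univ j), zero_smul]) (by simp),
      Lagrange.eval_basis_self ht.injOn (Finset.mem_univ j), one_smul]
  · exact Submodule.sum_mem _ fun i _ => Submodule.smul_mem _ _ (Submodule.subset_span ⟨i, rfl⟩)

theorem exists_orientationPreservingDiffeo_apply_eq_of_map_eq {d : ℕ} {ι : Type*} [Fintype ι]
    (π : Euc d →L[ℝ] ℝ) {x y : ι → Euc d} (hx : Function.Injective fun i => π (x i))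
    (hy : ∀ i, π (y i) = π (x i)) :
    ∃ g, OrientationPreservingDiffeo g ∧ ∀ i, g (x i) = y i := by
  obtain ⟨H, hH, hHx, hHspan⟩ := exists_contDiff_interpolation hx (fun i => y i - x i) 1
  have hspan : Submodule.span ℝ (Set.range fun i => y i - x i) ≤
      LinearMap.ker (π : Euc d →ₗ[ℝ] ℝ) :=
    Submodule.span_le.2 <| Set.range_subset_iff.2 fun i => by simp [hy]
  refine ⟨_, orientationPreservingDiffeo_shear π hH fun s => hspan (hHspan s), fun i => ?_⟩
  simp [hHx]

def momentFunctional (d : ℕ) (t : ℝ) : Euc d →L[ℝ] ℝ :=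
  ∑ μ : Fin d, t ^ (μ : ℕ) • EuclideanSpace.proj μ

theorem momentFunctional_apply {d : ℕ} (t : ℝ) (p : Euc d) :
    momentFunctional d t p = ∑ μ : Fin d, t ^ (μ : ℕ) * p μ := by
  simp [momentFunctional]

theorem momentFunctional_single {d : ℕ} (t : ℝ) (μ : Fin d) (a : ℝ) :
    momentFunctional d t (EuclideanSpace.single μ a) = t ^ (μ : ℕ) * a := by
  simp [momentFunctional_apply, PiLp.single_apply]

theorem finite_setOf_momentFunctional_eq_zero {d : ℕ} {p : Euc d} (hp : p ≠ 0) :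
    {t | momentFunctional d t p = 0}.Finite := by
  set P : Polynomial ℝ := ∑ μ : Fin d, Polynomial.monomial μ (p μ)
  have hcoeff : ∀ μ : Fin d, P.coeff μ = p μ := fun μ => by
    simp [P, Polynomial.coeff_monomial, Fin.val_inj]
  have hP : P ≠ 0 := by
    obtain ⟨μ, hμ⟩ : ∃ μ, p μ ≠ 0 := by
      by_contra! h
      exact hp (PiLp.ext h)
    exact fun h => hμ (by rw [← hcoeff μ, h, Polynomial.coeff_zero])
  refine (Polynomial.finite_setOfPred_isRoot hP).subset fun t ht => ?_
  simpa [P, Polynomial.eval_finsetSum, momentFunctional_apply, mul_comm] using ht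

theorem exists_injective_momentFunctional {d : ℕ} {ι : Type*} [Finite ι] {x : ι → Euc d}
    (hx : Function.Injective x) : ∃ t, Function.Injective fun i => momentFunctional d t (x i) := by
  have hfin : (⋃ ij : {ij : ι × ι // ij.1 ≠ ij.2},
      {t | momentFunctional d t (x ij.1.1 - x ij.1.2) = 0}).Finite :=
    Set.finite_iUnion fun ij =>
      finite_setOf_momentFunctional_eq_zero (sub_ne_zero.2 (hx.ne ij.2))
  obtain ⟨t, ht⟩ := hfin.exists_notMem
  refine ⟨t, fun i j hij => by_contra fun hne => ht (Set.mem_iUnion.2 ⟨⟨(i, j), hne⟩, ?_⟩)⟩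
  simpa [map_sub, sub_eq_zero] using hij

theorem exists_orientationPreservingDiffeo_apply_eq_smul_single {d N : ℕ} (hd : 2 ≤ d)
    {x : Fin N → Euc d} (hx : Function.Injective x) :
    ∃ g, OrientationPreservingDiffeo g ∧
      ∀ i, g (x i) = (i : ℝ) • EuclideanSpace.single (⟨1, hd⟩ : Fin d) 1 := by
  set e₀ := EuclideanSpace.single (⟨0, by omega⟩ : Fin d) (1 : ℝ)
  set e₁ := EuclideanSpace.single (⟨1, hd⟩ : Fin d) (1 : ℝ)
  obtain ⟨t, ht⟩ := exists_injective_momentFunctional hx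
  set π := momentFunctional d t
  set u := e₁ - t • e₀
  have hπu : π u = 0 := by
    simp [π, u, e₀, e₁, momentFunctional_single]
  have hu : u ⟨1, hd⟩ = 1 := by simp [u, e₀, e₁]
  set y : Fin N → Euc d := fun i => x i + ((i : ℝ) - x i ⟨1, hd⟩) • u
  have hy : ∀ i, y i ⟨1, hd⟩ = i := fun i => by simp [y, hu]
  obtain ⟨g₁, hg₁, hg₁x⟩ := exists_orientationPreservingDiffeo_apply_eq_of_map_eq π ht
    (y := y) fun i => by simp [y, hπu]
  obtain ⟨g₂, hg₂, hg₂y⟩ := exists_orientationPreservingDiffeo_apply_eq_of_map_eq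
    (EuclideanSpace.proj (⟨1, hd⟩ : Fin d)) (x := y) (y := fun i => (i : ℝ) • e₁)
    (fun i j hij => Fin.ext (by simpa [hy] using hij)) fun i => by simp [hy, e₁]
  exact ⟨g₂ ∘ g₁, hg₂.comp hg₁, fun i => by simp [hg₁x, hg₂y]⟩

theorem exists_orientationPreservingDiffeo_apply_eq {d N : ℕ} (hd : 2 ≤ d)
    {x z : Fin N → Euc d} (hx : Function.Injective x) (hz : Function.Injective z) :
    ∃ g, OrientationPreservingDiffeo g ∧ ∀ i, g (x i) = z i := by
  obtain ⟨gx, hgx, hgx_apply⟩ := exists_orientationPreservingDiffeo_apply_eq_smul_single hd hx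
  obtain ⟨gz, hgz, hgz_apply⟩ := exists_orientationPreservingDiffeo_apply_eq_smul_single hd hz
  obtain ⟨gz', hgz', hgz'gz⟩ := hgz.exists_leftInverse
  exact ⟨gz' ∘ gx, hgz'.comp hgx, fun i => by
    rw [Function.comp_apply, hgx_apply, ← hgz_apply, hgz'gz]⟩

theorem exists_mem_norm_sub_lt_of_cuap {d N : ℕ} (hd : 2 ≤ d) {𝒢 : Set (Euc d → Euc d)}
    (hCUAP : ∀ g : Euc d → Euc d, OrientationPreservingDiffeo g →
      ∀ Ω : Set (Euc d), IsCompact Ω → ∀ ε : ℝ, 0 < ε →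
        ∃ φ ∈ 𝒢, ∀ x ∈ Ω, ‖g x - φ x‖ ≤ ε)
    {x z : Fin N → Euc d} (hx : Function.Injective x) (hz : Function.Injective z)
    {δ : ℝ} (hδ : 0 < δ) : ∃ ψ ∈ 𝒢, ∀ i, ‖ψ (x i) - z i‖ < δ := by
  obtain ⟨g, hg, hgx⟩ := exists_orientationPreservingDiffeo_apply_eq hd hx hz
  obtain ⟨ψ, hψ, hψg⟩ := hCUAP g hg _ (Set.finite_range x).isCompact (δ / 2) (half_pos hδ)
  refine ⟨ψ, hψ, fun i => ?_⟩
  calc ‖ψ (x i) - z i‖ = ‖g (x i) - ψ (x i)‖ := by rw [hgx, norm_sub_rev]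
    _ ≤ δ / 2 := hψg _ ⟨i, rfl⟩
    _ < δ := half_lt_self hδ

theorem uip_of_cuap_and_localUIP_general
    (d : ℕ) (hd : 2 ≤ d) (𝒢 : Set (Euc d → Euc d))
    (hcomp : ∀ φ ∈ 𝒢, ∀ ψ ∈ 𝒢, φ ∘ ψ ∈ 𝒢)
    (hinv : ∀ φ ∈ 𝒢, ∃ ψ ∈ 𝒢, Function.LeftInverse ψ φ ∧ Function.RightInverse ψ φ)
    (hCUAP : ∀ g : Euc d → Euc d, OrientationPreservingDiffeo g →
      ∀ Ω : Set (Euc d), IsCompact Ω → ∀ ε : ℝ, 0 < ε →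
        ∃ φ ∈ 𝒢, ∀ x ∈ Ω, ‖g x - φ x‖ ≤ ε)
    (hlocalUIP : ∀ N : ℕ, ∃ (z : Fin N → Euc d) (δ : ℝ), Function.Injective z ∧ 0 < δ ∧
      ∀ z' : Fin N → Euc d, Function.Injective z' → (∀ i, ‖z' i - z i‖ < δ) →
        ∃ φ ∈ 𝒢, ∀ i, φ (z i) = z' i)
    (N : ℕ) (x y : Fin N → Euc d)
    (hx : Function.Injective x) (hy : Function.Injective y) :
    ∃ φ ∈ 𝒢, ∀ i, φ (x i) = y i := by
  obtain ⟨z, δ, hz, hδ, hlocal⟩ := hlocalUIP N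
  have hto_z : ∀ v : Fin N → Euc d, Function.Injective v → ∃ ψ ∈ 𝒢, ∀ i, ψ (v i) = z i := by
    intro v hv
    obtain ⟨ψ, hψ, hψv⟩ := exists_mem_norm_sub_lt_of_cuap hd hCUAP hv hz hδ
    obtain ⟨ψ', -, hψ'ψ, -⟩ := hinv ψ hψ
    obtain ⟨φ, hφ, hφz⟩ := hlocal (fun i => ψ (v i)) (hψ'ψ.injective.comp hv) hψv
    obtain ⟨φ', hφ', hφ'φ, -⟩ := hinv φ hφ
    exact ⟨φ' ∘ ψ, hcomp _ hφ' _ hψ, fun i => by rw [Function.comp_apply, ← hφz i, hφ'φ]⟩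
  obtain ⟨ψx, hψx, hψx_apply⟩ := hto_z x hx
  obtain ⟨ψy, hψy, hψy_apply⟩ := hto_z y hy
  obtain ⟨ψy', hψy', hψy'ψy, -⟩ := hinv ψy hψy
  exact ⟨ψy' ∘ ψx, hcomp _ hψy' _ hψx, fun i => by
    rw [Function.comp_apply, hψx_apply, ← hψy_apply, hψy'ψy]⟩

/-- for a family `𝒢` of bijections of `ℝ^d` (`d ≥ 2`) closed under composition and
inverses, the uniform universal approximation property for orientation-preserving
diffeomorphisms together with the local universal interpolation property implies the universal
interpolation property. -/
theorem uip_of_cuap_and_localUIP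
    (d : ℕ) (hd : 2 ≤ d) (𝒢 : Set (Euc d → Euc d))
    (hbij : ∀ φ ∈ 𝒢, Function.Bijective φ)
    (hcomp : ∀ φ ∈ 𝒢, ∀ ψ ∈ 𝒢, φ ∘ ψ ∈ 𝒢)
    (hinv : ∀ φ ∈ 𝒢, ∃ ψ ∈ 𝒢, Function.LeftInverse ψ φ ∧ Function.RightInverse ψ φ)
    (hCUAP : ∀ g : Euc d → Euc d, OrientationPreservingDiffeo g →
      ∀ Ω : Set (Euc d), IsCompact Ω → ∀ ε : ℝ, 0 < ε →
        ∃ φ ∈ 𝒢, ∀ x ∈ Ω, ‖g x - φ x‖ ≤ ε)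
    (hlocalUIP : ∀ N : ℕ, ∃ (z : Fin N → Euc d) (δ : ℝ), Function.Injective z ∧ 0 < δ ∧
      ∀ z' : Fin N → Euc d, Function.Injective z' → (∀ i, ‖z' i - z i‖ < δ) →
        ∃ φ ∈ 𝒢, ∀ i, φ (z i) = z' i)
    (N : ℕ) (x y : Fin N → Euc d)
    (hx : Function.Injective x) (hy : Function.Injective y) :
    ∃ φ ∈ 𝒢, ∀ i, φ (x i) = y i :=
  uip_of_cuap_and_localUIP_general d hd 𝒢 hcomp hinv hCUAP hlocalUIP N x y hx hy
end
end

section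
/- Let d ≥ 1, n ≥ 1, let D₁, …, Dₙ ⊆ ℝ^d be open sets, and for each i let Fᵢ : Dᵢ → ℝ^d be continuous with Fᵢ(Dᵢ) ⊆ D_{i+1} for i < n; set T = Fₙ ∘ ⋯ ∘ F₁ : D₁ → ℝ^d. Let ℱ be a set of continuous functions ℝ^d → ℝ^d such that for each i ∈ {1,…,n}, every compact set Kᵢ ⊆ Dᵢ and every δ > 0, there exists h ∈ ℱ with ‖Fᵢ(x) − h(x)‖ ≤ δ for all x ∈ Kᵢ. Then for every compact set K ⊆ D₁ and every ε > 0, there exist functions h₁, …, hₙ ∈ ℱ such that ‖T(x) − hₙ ∘ ⋯ ∘ h₁(x)‖ ≤ ε for all x ∈ K. -/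
noncomputable section

/-- `compChain F n = F (n-1) ∘ ⋯ ∘ F 0`. -/
def compChain {α : Type*} (F : ℕ → α → α) : ℕ → α → α
  | 0 => id
  | (k + 1) => F k ∘ compChain F k

/-! The maps are approximated from the outside in. Uniform continuity of the last map `F n` on a
compact neighbourhood `L ⊆ D n` of the image of `K` gives a `δ` such that any approximation of
`F n` on `L` stays good at points `δ`-close to that image; by induction, the inner composite can
be approximated to within `δ` on `K`. -/

open Metric

theorem compChain_congr {α : Type*} {f g : ℕ → α → α} :
    ∀ n, (∀ i < n, f i = g i) → compChain f n = compChain g n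
  | 0, _ => rfl
  | k + 1, h => by
    simp only [compChain, compChain_congr k fun i hi => h i (Nat.lt_succ_of_lt hi),
      h k (Nat.lt_succ_self k)]

theorem mapsTo_compChain {α : Type*} {D : ℕ → Set α} {F : ℕ → α → α} :
    ∀ n, (∀ i < n, Set.MapsTo (F i) (D i) (D (i + 1))) →
      Set.MapsTo (compChain F n) (D 0) (D n)
  | 0, _ => Set.mapsTo_id _
  | k + 1, h =>
    (h k (Nat.lt_succ_self k)).comp (mapsTo_compChain k fun i hi => h i (Nat.lt_succ_of_lt hi))

theorem continuousOn_compChain {α : Type*} [TopologicalSpace α] {D : ℕ → Set α}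
    {F : ℕ → α → α} :
    ∀ n, (∀ i < n, Set.MapsTo (F i) (D i) (D (i + 1))) →
      (∀ i < n, ContinuousOn (F i) (D i)) → ContinuousOn (compChain F n) (D 0)
  | 0, _, _ => continuousOn_id
  | k + 1, hm, hc =>
    (hc k (Nat.lt_succ_self k)).comp
      (continuousOn_compChain k (fun i hi => hm i (Nat.lt_succ_of_lt hi))
        fun i hi => hc i (Nat.lt_succ_of_lt hi))
      (mapsTo_compChain k fun i hi => hm i (Nat.lt_succ_of_lt hi))

section

variable {X Y : Type*} [PseudoMetricSpace X] [PseudoMetricSpace Y]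

def ApproxOnCompacts (ℱ : Set (X → Y)) (f : X → Y) (D : Set X) : Prop :=
  ∀ K ⊆ D, IsCompact K → ∀ δ > 0, ∃ h ∈ ℱ, ∀ x ∈ K, dist (f x) (h x) ≤ δ

theorem ApproxOnCompacts.exists_dist_le_of_dist_lt [LocallyCompactSpace X]
    {ℱ : Set (X → Y)} {f : X → Y} {D K : Set X} (hℱ : ApproxOnCompacts ℱ f D)
    (hD : IsOpen D) (hf : ContinuousOn f D) (hKc : IsCompact K) (hKD : K ⊆ D)
    {ε : ℝ} (hε : 0 < ε) :
    ∃ δ > 0, ∃ h ∈ ℱ, ∀ y ∈ K, ∀ z, dist y z < δ → dist (f y) (h z) ≤ ε := by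
  obtain ⟨L, hLc, hKL, hLD⟩ := exists_compact_between hKc hD hKD
  obtain ⟨r, hr, hrL⟩ := hKc.exists_thickening_subset_open isOpen_interior hKL
  obtain ⟨δ, hδ, hfδ⟩ := uniformContinuousOn_iff.mp
    (hLc.uniformContinuousOn_of_continuous (hf.mono hLD)) (ε / 2) (half_pos hε)
  obtain ⟨h, hℱh, hfh⟩ := hℱ L hLD hLc (ε / 2) (half_pos hε)
  refine ⟨min δ r, lt_min hδ hr, h, hℱh, fun y hy z hyz => ?_⟩
  have hyL : y ∈ L := interior_subset (hKL hy)
  have hzL : z ∈ L :=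
    interior_subset <| hrL <| mem_thickening_iff.mpr
      ⟨y, hy, by rw [dist_comm]; exact hyz.trans_le (min_le_right _ _)⟩
  calc dist (f y) (h z) ≤ dist (f y) (f z) + dist (f z) (h z) := dist_triangle _ _ _
    _ ≤ ε / 2 + ε / 2 :=
      add_le_add (hfδ y hyL z hzL (hyz.trans_le (min_le_left _ _))).le (hfh z hzL)
    _ = ε := add_halves ε

end

theorem exists_dist_compChain_le {X : Type*} [PseudoMetricSpace X] [LocallyCompactSpace X]
    {ℱ : Set (X → X)} {D : ℕ → Set X} {F : ℕ → X → X} {K : Set X} (hKc : IsCompact K)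
    (hKD : K ⊆ D 0) :
    ∀ n, (∀ i < n, IsOpen (D i)) → (∀ i < n, ContinuousOn (F i) (D i)) →
      (∀ i, i + 1 < n → Set.MapsTo (F i) (D i) (D (i + 1))) →
      (∀ i < n, ApproxOnCompacts ℱ (F i) (D i)) → ∀ ε > 0,
      ∃ h : ℕ → X → X, (∀ i < n, h i ∈ ℱ) ∧
        ∀ x ∈ K, dist (compChain F n x) (compChain h n x) ≤ ε
  | 0, _, _, _, _, ε, hε => ⟨fun _ => id, by simp, fun x _ => by simpa [compChain] using hε.le⟩
  | n + 1, hopen, hcont, hmaps, happrox, ε, hε => by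
    have hmaps' : ∀ i < n, Set.MapsTo (F i) (D i) (D (i + 1)) := fun i hi => hmaps i (by omega)
    have hK'c : IsCompact (compChain F n '' K) :=
      hKc.image_of_continuousOn
        ((continuousOn_compChain n hmaps' fun i hi => hcont i (by omega)).mono hKD)
    obtain ⟨δ, hδ, hN, hℱN, hNδ⟩ := (happrox n (by omega)).exists_dist_le_of_dist_lt
      (hopen n (by omega)) (hcont n (by omega)) hK'c
      ((mapsTo_compChain n hmaps').image_subset.trans' (Set.image_mono hKD)) hε
    obtain ⟨g, hℱg, hgδ⟩ := exists_dist_compChain_le hKc hKD n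
      (fun i hi => hopen i (by omega)) (fun i hi => hcont i (by omega))
      (fun i hi => hmaps i (by omega)) (fun i hi => happrox i (by omega)) (δ / 2) (half_pos hδ)
    have hinner : compChain (Function.update g n hN) n = compChain g n :=
      compChain_congr n fun i hi => Function.update_of_ne hi.ne _ _
    refine ⟨Function.update g n hN, fun i hi => ?_, fun x hx => ?_⟩
    · rcases Nat.lt_succ_iff_lt_or_eq.mp hi with hi | rfl
      · simpa [Function.update_of_ne hi.ne] using hℱg i hi
      · simpa using hℱN
    · simpa [compChain, hinner] using
        hNδ _ (Set.mem_image_of_mem _ hx) _ ((hgδ x hx).trans_lt (half_lt_self hδ))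

theorem composition_approximation_general
    (d : ℕ) (n : ℕ)
    (D : ℕ → Set (Euc d)) (F : ℕ → Euc d → Euc d)
    (hopen : ∀ i < n, IsOpen (D i))
    (hcont : ∀ i < n, ContinuousOn (F i) (D i))
    (hmaps : ∀ i, i + 1 < n → Set.MapsTo (F i) (D i) (D (i + 1)))
    (ℱ : Set (Euc d → Euc d))
    (happrox : ∀ i < n, ∀ K : Set (Euc d), K ⊆ D i → IsCompact K → ∀ δ : ℝ, 0 < δ →
      ∃ h ∈ ℱ, ∀ x ∈ K, ‖F i x - h x‖ ≤ δ)
    (K : Set (Euc d)) (hK : K ⊆ D 0) (hKc : IsCompact K) (ε : ℝ) (hε : 0 < ε) :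
    ∃ h : ℕ → Euc d → Euc d, (∀ i < n, h i ∈ ℱ) ∧
      ∀ x ∈ K, ‖compChain F n x - compChain h n x‖ ≤ ε := by
  simp only [← dist_eq_norm] at happrox ⊢
  exact exists_dist_compChain_le hKc hK n hopen hcont hmaps happrox ε hε

/-- uniform approximation of compositions. If a class `ℱ` of continuous maps can
uniformly approximate each `F i` on compact subsets of its open domain `D i`, then compositions
from `ℱ` uniformly approximate `F (n-1) ∘ ⋯ ∘ F 0` on compact subsets of `D 0`. -/
theorem composition_approximation
    (d : ℕ) (hd : 1 ≤ d) (n : ℕ) (hn : 1 ≤ n)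
    (D : ℕ → Set (Euc d)) (F : ℕ → Euc d → Euc d)
    (hopen : ∀ i < n, IsOpen (D i))
    (hcont : ∀ i < n, ContinuousOn (F i) (D i))
    (hmaps : ∀ i, i + 1 < n → Set.MapsTo (F i) (D i) (D (i + 1)))
    (ℱ : Set (Euc d → Euc d))
    (hℱcont : ∀ h ∈ ℱ, Continuous h)
    (happrox : ∀ i < n, ∀ K : Set (Euc d), K ⊆ D i → IsCompact K → ∀ δ : ℝ, 0 < δ →
      ∃ h ∈ ℱ, ∀ x ∈ K, ‖F i x - h x‖ ≤ δ)
    (K : Set (Euc d)) (hK : K ⊆ D 0) (hKc : IsCompact K) (ε : ℝ) (hε : 0 < ε) :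
    ∃ h : ℕ → Euc d → Euc d, (∀ i < n, h i ∈ ℱ) ∧
      ∀ x ∈ K, ‖compChain F n x - compChain h n x‖ ≤ ε :=
  composition_approximation_general d n D F hopen hcont hmaps ℱ happrox K hK hKc ε hε
end
end

section
/- Let d ≥ 1, let f₁, …, f_m : ℝ^d → ℝ^d be locally Lipschitz continuous, let a₁, …, a_m > 0 and set f = a₁ f₁ + ⋯ + a_m f_m. Let τ ≥ 0 and let Ω ⊆ ℝ^d be compact, and suppose that for every x ∈ Ω there is a differentiable curve γ_x : [0, τ] → ℝ^d with γ_x(0) = x and γ_x′(t) = f(γ_x(t)) for all t ∈ [0, τ]. Then for every ε > 0 there exists n ∈ ℕ such that for every x ∈ Ω there exists a piecewise solution η from x for the sequence of mn vector fields consisting of (f₁, f₂, …, f_m) repeated n times, with corresponding times (a₁τ/n, a₂τ/n, …, a_mτ/n) repeated n times, and its endpoint satisfies ‖η(T) − γ_x(τ)‖ ≤ ε, where T = (a₁ + ⋯ + a_m)τ. -/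
noncomputable section

/-- A piecewise solution from `x` for the vector fields `g 0, …, g (n-1)` with times
`τ 0, …, τ (n-1)`: a curve, continuous on `[0, T]` with `T = τ 0 + ⋯ + τ (n-1)`, starting at `x`,
which on each open subinterval `(t_{i}, t_{i+1})` solves `γ' = g i (γ)`. -/
def IsPiecewiseSolution {d : ℕ} (n : ℕ) (g : ℕ → Euc d → Euc d) (τ : ℕ → ℝ)
    (x : Euc d) (γ : ℝ → Euc d) : Prop :=
  ContinuousOn γ (Set.Icc 0 (∑ j ∈ Finset.range n, τ j)) ∧ γ 0 = x ∧
  ∀ i < n, ∀ t ∈ Set.Ioo (∑ j ∈ Finset.range i, τ j) (∑ j ∈ Finset.range (i + 1), τ j),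
    HasDerivAt γ (g i (γ t)) t

/-!
Cut the fields `fᵢ` off outside a ball that contains a unit neighbourhood of all the trajectories
(they are uniformly bounded by compactness of `Ω` and continuous dependence on the initial point),
so that they become globally Lipschitz and bounded. One cycle of the splitting scheme with step
`h = τ / n` then agrees with an explicit Euler step of `f` up to `O(h²)`, and so does the exact
flow; since the Euler step is `(1 + L h)`-Lipschitz, a discrete Gronwall inequality bounds the error
after `n` cycles by `O(1 / n)`. For `n` large the split curve stays within distance `1` of the
trajectory, hence in the ball where the cut-off fields are the original ones.
-/

open Set Metric Real Finset Filter Topology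
open scoped NNReal

section Cutoff

variable {E F : Type*} [NormedAddCommGroup E] [NormedSpace ℝ E] [NormedAddCommGroup F]

theorem norm_smul_sub_smul_le_of_norm_le {R : ℝ} (hR : 0 < R) {x y : E} (hxy : ‖y‖ ≤ ‖x‖) :
    ‖(R / max R ‖x‖) • x - (R / max R ‖y‖) • y‖ ≤ 2 * ‖x - y‖ := by
  set X := max R ‖x‖
  set Y := max R ‖y‖
  have hY : R ≤ Y := le_max_left _ _
  have hYX : Y ≤ X := max_le_max le_rfl hxy
  have hXY : X - Y ≤ ‖x - y‖ := by
    have := norm_sub_norm_le x y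
    rcases le_total R ‖x‖ with h | h
    · have : ‖y‖ ≤ Y := le_max_right _ _
      simp only [X, max_eq_right h]; linarith
    · simp only [X, Y, max_eq_left h, max_eq_left (hxy.trans h)]; linarith [norm_nonneg (x - y)]
  have hRX : R / X ≤ 1 := (div_le_one (hR.trans_le (hY.trans hYX))).2 (hY.trans hYX)
  have hcoef : (R / Y - R / X) * ‖y‖ ≤ X - Y := by
    have hY0 : 0 < Y := hR.trans_le hY
    have hX0 : 0 < X := hY0.trans_le hYX
    rw [div_sub_div _ _ hY0.ne' hX0.ne', div_mul_eq_mul_div, div_le_iff₀ (by positivity)]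
    have : R * ‖y‖ ≤ X * Y := mul_le_mul (hY.trans hYX) (le_max_right _ _) (norm_nonneg _) hX0.le
    nlinarith
  calc ‖(R / X) • x - (R / Y) • y‖ = ‖(R / X) • (x - y) - (R / Y - R / X) • y‖ := by
        congr 1; simp only [smul_sub, sub_smul]; abel
    _ ≤ (R / X) * ‖x - y‖ + (R / Y - R / X) * ‖y‖ := by
        refine (norm_sub_le _ _).trans ?_
        rw [norm_smul, norm_smul, Real.norm_of_nonneg (by positivity),
          Real.norm_of_nonneg (sub_nonneg.2 (div_le_div_of_nonneg_left hR.le (hR.trans_le hY) hYX))]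
    _ ≤ 2 * ‖x - y‖ := by nlinarith [norm_nonneg (x - y)]

theorem exists_lipschitzWith_retraction_closedBall {R : ℝ} (hR : 0 < R) :
    ∃ P : E → E, LipschitzWith 2 P ∧ (∀ x, P x ∈ closedBall 0 R) ∧
      ∀ x ∈ closedBall (0 : E) R, P x = x := by
  refine ⟨fun x => (R / max R ‖x‖) • x, LipschitzWith.of_dist_le_mul fun x y => ?_,
    fun x => ?_, fun x hx => ?_⟩
  · rw [dist_eq_norm, dist_eq_norm, NNReal.coe_two]
    rcases le_total ‖y‖ ‖x‖ with h | h
    · exact norm_smul_sub_smul_le_of_norm_le hR h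
    · rw [norm_sub_rev, norm_sub_rev x]
      exact norm_smul_sub_smul_le_of_norm_le hR h
  · rw [mem_closedBall_zero_iff, norm_smul, Real.norm_of_nonneg (by positivity),
      div_mul_eq_mul_div, div_le_iff₀ (hR.trans_le (le_max_left _ _))]
    exact mul_le_mul_of_nonneg_left (le_max_right _ _) hR.le
  · rw [mem_closedBall_zero_iff] at hx
    simp [max_eq_left hx, hR.ne']

theorem LocallyLipschitz.exists_lipschitzWith_bounded_eqOn_closedBall [ProperSpace E]
    {f : E → F} (hf : LocallyLipschitz f) {R : ℝ} (hR : 0 < R) :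
    ∃ (g : E → F) (K M : ℝ≥0), LipschitzWith K g ∧ (∀ x, ‖g x‖ ≤ M) ∧
      EqOn g f (closedBall 0 R) := by
  obtain ⟨P, hPlip, hPball, hPid⟩ := exists_lipschitzWith_retraction_closedBall (E := E) hR
  obtain ⟨K, hK⟩ := (hf.locallyLipschitzOn (s := closedBall 0 R)).exists_lipschitzOnWith_of_compact
    (isCompact_closedBall 0 R)
  obtain ⟨M, hM⟩ := (isCompact_closedBall (0 : E) R).exists_bound_of_continuousOn
    hf.continuous.continuousOn
  refine ⟨f ∘ P, K * 2, M.toNNReal,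
    lipschitzOnWith_univ.1 (hK.comp hPlip.lipschitzOnWith fun x _ => hPball x),
    fun x => (hM _ (hPball x)).trans (le_coe_toNNReal M), fun x hx => ?_⟩
  simp [hPid x hx]

theorem exists_forall_lipschitzWith_bounded_eqOn_closedBall [ProperSpace E] {ι : Type*} [Fintype ι]
    {f : ι → E → F} (hf : ∀ i, LocallyLipschitz (f i)) {R : ℝ} (hR : 0 < R) :
    ∃ (g : ι → E → F) (K M : ℝ≥0), ∀ i, LipschitzWith K (g i) ∧ (∀ x, ‖g i x‖ ≤ M) ∧
      EqOn (g i) (f i) (closedBall 0 R) := by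
  choose g K M hg using fun i => (hf i).exists_lipschitzWith_bounded_eqOn_closedBall hR
  refine ⟨g, univ.sup K, univ.sup M, fun i => ⟨(hg i).1.weaken (le_sup (mem_univ i)),
    fun x => ((hg i).2.1 x).trans ?_, (hg i).2.2⟩⟩
  exact_mod_cast le_sup (f := M) (mem_univ i)

end Cutoff

section Sums

variable {α F : Type*} [NormedAddCommGroup F] [NormedSpace ℝ F] {K M : ℝ≥0}

theorem lipschitzWith_sum_smul [PseudoEMetricSpace α] {ι : Type*} (s : Finset ι) (a : ι → ℝ)
    {G : ι → α → F} (hG : ∀ i, LipschitzWith K (G i)) :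
    LipschitzWith ((∑ i ∈ s, ‖a i‖₊) * K) fun x => ∑ i ∈ s, a i • G i x := by
  classical
  induction s using Finset.induction_on with
  | empty => simp
  | insert i s hi ih =>
    simp_rw [sum_insert hi, add_mul]
    exact ((lipschitzWith_smul (a i)).comp (hG i)).add ih

theorem locallyLipschitz_sum_smul [PseudoMetricSpace α] {ι : Type*} (s : Finset ι) (a : ι → ℝ)
    {f : ι → α → F} (hf : ∀ i, LocallyLipschitz (f i)) :
    LocallyLipschitz fun x => ∑ i ∈ s, a i • f i x := by
  classical
  induction s using Finset.induction_on with
  | empty => simpa using LocallyLipschitz.const (0 : F)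
  | insert i s hi ih =>
    simp_rw [sum_insert hi]
    exact ((lipschitzWith_smul (a i)).locallyLipschitz.comp (hf i)).add ih

theorem norm_sum_smul_le {ι : Type*} (s : Finset ι) (a : ι → ℝ) {G : ι → α → F}
    (hGM : ∀ i x, ‖G i x‖ ≤ M) (x : α) :
    ‖∑ i ∈ s, a i • G i x‖ ≤ ((∑ i ∈ s, ‖a i‖₊) * M : ℝ≥0) := by
  push_cast
  rw [sum_mul]
  exact (norm_sum_le _ _).trans (sum_le_sum fun i _ => by
    rw [norm_smul]; exact mul_le_mul_of_nonneg_left (hGM i x) (norm_nonneg _))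

end Sums

section Solutions

variable {E : Type*} [NormedAddCommGroup E] [NormedSpace ℝ E]

def IsSolutionOn (g : E → E) (u : ℝ → E) (a b : ℝ) : Prop :=
  ContinuousOn u (Icc a b) ∧ ∀ t ∈ Ioo a b, HasDerivAt u (g (u t)) t

variable {g : E → E} {u : ℝ → E} {a b : ℝ}

theorem isSolutionOn_of_hasDerivAt {a' b' : ℝ} (hu : ∀ t ∈ Icc a' b', HasDerivAt u (g (u t)) t)
    (ha : a' ≤ a) (hb : b ≤ b') : IsSolutionOn g u a b :=
  ⟨fun t ht => (hu t ⟨ha.trans ht.1, ht.2.trans hb⟩).continuousAt.continuousWithinAt,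
    fun t ht => hu t ⟨ha.trans ht.1.le, ht.2.le.trans hb⟩⟩

theorem IsSolutionOn.hasDerivWithinAt_Ici (hu : IsSolutionOn g u a b) (hg : Continuous g) :
    ∀ t ∈ Ico a b, HasDerivWithinAt u (g (u t)) (Ici t) t := by
  rintro t ⟨hat, htb⟩
  obtain rfl | hat := hat.eq_or_lt
  · have hcont : ContinuousWithinAt u (Ioo a b) a :=
      (hu.1.continuousWithinAt ⟨le_rfl, htb.le⟩).mono Ioo_subset_Icc_self
    have hlim : Tendsto (fun s => g (u s)) (𝓝[>] a) (𝓝 (g (u a))) := by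
      rw [← nhdsWithin_Ioo_eq_nhdsGT htb]
      exact hg.continuousAt.tendsto.comp hcont
    refine hasDerivWithinAt_Ici_of_tendsto_deriv
      (fun s hs => (hu.2 s hs).differentiableAt.differentiableWithinAt) hcont
      (Ioo_mem_nhdsGT htb) (hlim.congr' ?_)
    filter_upwards [Ioo_mem_nhdsGT htb] with s hs using (hu.2 s hs).deriv.symm
  · exact (hu.2 t ⟨hat, htb⟩).hasDerivWithinAt

variable {K M : ℝ≥0}

theorem IsSolutionOn.norm_sub_le (hu : IsSolutionOn g u a b) (hg : Continuous g)
    (hM : ∀ x, ‖g x‖ ≤ M) : ∀ t ∈ Icc a b, ‖u t - u a‖ ≤ M * (t - a) :=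
  norm_image_sub_le_of_norm_deriv_right_le_segment hu.1 (hu.hasDerivWithinAt_Ici hg)
    fun _ _ => hM _

theorem IsSolutionOn.norm_sub_sub_smul_le (hu : IsSolutionOn g u a b) (hab : a ≤ b)
    (hg : LipschitzWith K g) (hM : ∀ x, ‖g x‖ ≤ M) :
    ‖u b - u a - (b - a) • g (u a)‖ ≤ K * M * (b - a) ^ 2 := by
  have hderiv : ∀ t ∈ Ico a b, HasDerivWithinAt (fun s => u s - (s - a) • g (u a))
      (g (u t) - g (u a)) (Ici t) t := fun t ht => by
    have := (((hasDerivAt_id t).sub_const a).smul_const (g (u a))).hasDerivWithinAt (s := Ici t)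
    rw [one_smul] at this
    exact (hu.hasDerivWithinAt_Ici hg.continuous t ht).sub this
  have hbound : ∀ t ∈ Ico a b, ‖g (u t) - g (u a)‖ ≤ K * M * (b - a) := fun t ht =>
    calc ‖g (u t) - g (u a)‖ ≤ K * ‖u t - u a‖ := hg.norm_sub_le _ _
      _ ≤ K * (M * (b - a)) := by
        gcongr
        exact (hu.norm_sub_le hg.continuous hM t (Ico_subset_Icc_self ht)).trans
          (by gcongr; exact ht.2.le)
      _ = K * M * (b - a) := by ring
  have := norm_image_sub_le_of_norm_deriv_right_le_segment
    (hu.1.sub ((continuousOn_id.sub continuousOn_const).smul continuousOn_const)) hderiv hbound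
    b ⟨hab, le_rfl⟩
  simpa [sub_right_comm _ _ (u a), pow_two, mul_assoc] using this

theorem exists_isSolutionOn [CompleteSpace E] (hg : LipschitzWith K g) (hM : ∀ x, ‖g x‖ ≤ M)
    (z : E) (hab : a ≤ b) : ∃ u, u a = z ∧ IsSolutionOn g u a b := by
  have hPL : IsPicardLindelof (fun _ => g) (tmin := a) (tmax := b) ⟨a, le_rfl, hab⟩ z
      (M * (b - a)).toNNReal 0 M K :=
    .of_time_independent (fun x _ => hM x) hg.lipschitzOnWith (by
      simp [max_eq_left (sub_nonneg.2 hab)])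
  obtain ⟨u, hu0, hu⟩ := hPL.exists_eq_forall_mem_Icc_hasDerivWithinAt₀
  exact ⟨u, hu0, fun t ht => (hu t ht).continuousWithinAt,
    fun t ht => (hu t (Ioo_subset_Icc_self ht)).hasDerivAt (Icc_mem_nhds ht.1 ht.2)⟩

theorem norm_sub_le_of_forall_isSolutionOn {G : ℕ → E → E} {t : ℕ → ℝ} {η : ℝ → E} {N : ℕ}
    (ht : Monotone t)
    (hG : ∀ k, Continuous (G k)) (hGM : ∀ k x, ‖G k x‖ ≤ M)
    (hη : ∀ k < N, IsSolutionOn (G k) η (t k) (t (k + 1))) {i k : ℕ} (hik : i ≤ k) (hk : k < N) :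
    ∀ s ∈ Icc (t k) (t (k + 1)), ‖η s - η (t i)‖ ≤ M * (s - t i) := by
  have hgrid : ∀ k, i ≤ k → k ≤ N → ‖η (t k) - η (t i)‖ ≤ M * (t k - t i) := by
    intro k hik hkN
    induction k, hik using Nat.le_induction with
    | base => simp
    | succ k hik ih =>
      calc ‖η (t (k + 1)) - η (t i)‖ ≤ ‖η (t (k + 1)) - η (t k)‖ + ‖η (t k) - η (t i)‖ :=
            norm_sub_le_norm_sub_add_norm_sub _ _ _
        _ ≤ M * (t (k + 1) - t k) + M * (t k - t i) :=
            add_le_add ((hη k (by omega)).norm_sub_le (hG k) (hGM k) _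
              ⟨ht (Nat.le_succ k), le_rfl⟩) (ih (by omega))
        _ = M * (t (k + 1) - t i) := by ring
  intro s hs
  calc ‖η s - η (t i)‖ ≤ ‖η s - η (t k)‖ + ‖η (t k) - η (t i)‖ :=
        norm_sub_le_norm_sub_add_norm_sub _ _ _
    _ ≤ M * (s - t k) + M * (t k - t i) :=
        add_le_add ((hη k hk).norm_sub_le (hG k) (hGM k) s hs) (hgrid k hik hk.le)
    _ = M * (s - t i) := by ring

end Solutions

section Trajectories

variable {E : Type*} [NormedAddCommGroup E] [NormedSpace ℝ E] {F : E → E} {a b τ : ℝ}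

theorem ODE_solution_unique_of_locallyLipschitz (hF : LocallyLipschitz F) {u v : ℝ → E}
    (hu : ContinuousOn u (Icc a b)) (hu' : ∀ t ∈ Ico a b, HasDerivWithinAt u (F (u t)) (Ici t) t)
    (hv : ContinuousOn v (Icc a b)) (hv' : ∀ t ∈ Ico a b, HasDerivWithinAt v (F (v t)) (Ici t) t)
    (h : u a = v a) : EqOn u v (Icc a b) := by
  have hS : IsCompact (u '' Icc a b ∪ v '' Icc a b) :=
    (isCompact_Icc.image_of_continuousOn hu).union (isCompact_Icc.image_of_continuousOn hv)
  obtain ⟨K, hK⟩ := hF.locallyLipschitzOn.exists_lipschitzOnWith_of_compact hS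
  exact ODE_solution_unique_of_mem_Icc_right (v := fun _ => F) (fun _ _ => hK) hu hu'
    (fun t ht => .inl ⟨t, Ico_subset_Icc_self ht, rfl⟩) hv hv'
    (fun t ht => .inr ⟨t, Ico_subset_Icc_self ht, rfl⟩) h

/-- By uniqueness, such a `u` is the flow of a globally Lipschitz cutoff of `F`, which Gronwall's
inequality keeps within distance `1` of `u₀`. -/
theorem exists_pos_forall_norm_le_of_dist_lt [ProperSpace E] (hF : LocallyLipschitz F)
    (hτ : 0 ≤ τ) {u₀ : ℝ → E} (hu₀ : ∀ t ∈ Icc 0 τ, HasDerivAt u₀ (F (u₀ t)) t) :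
    ∃ δ > 0, ∃ R, ∀ u : ℝ → E, (∀ t ∈ Icc 0 τ, HasDerivAt u (F (u t)) t) →
      dist (u 0) (u₀ 0) < δ → ∀ t ∈ Icc 0 τ, ‖u t‖ ≤ R := by
  obtain ⟨R₀, hR₀⟩ := isCompact_Icc.exists_bound_of_continuousOn
    (isSolutionOn_of_hasDerivAt hu₀ le_rfl le_rfl).1
  obtain ⟨G, K, M, hGlip, hGM, hGF⟩ :=
    hF.exists_lipschitzWith_bounded_eqOn_closedBall (R := |R₀| + 1) (by positivity)
  have hball : ∀ x : E, ∀ t ∈ Icc 0 τ, dist x (u₀ t) < 1 → x ∈ closedBall 0 (|R₀| + 1) :=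
    fun x t ht hx => mem_closedBall_zero_iff.2 <| by
      linarith [norm_le_norm_add_norm_sub' x (u₀ t), dist_eq_norm x (u₀ t), hR₀ t ht,
        le_abs_self R₀]
  refine ⟨exp (-(K * τ)), exp_pos _, |R₀| + 1, fun u hu hu0 t ht => ?_⟩
  obtain ⟨ζ, hζ0, hζ⟩ := exists_isSolutionOn hGlip hGM (u 0) hτ
  have hu₀G : IsSolutionOn G u₀ 0 τ := isSolutionOn_of_hasDerivAt (fun t ht => by
    rw [hGF (hball _ t ht (by simp))]; exact hu₀ t ht) le_rfl le_rfl
  have hclose : ∀ t ∈ Icc 0 τ, dist (ζ t) (u₀ t) < 1 := fun t ht => by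
    have := dist_le_of_trajectories_ODE (v := fun _ => G) (fun _ => hGlip) hζ.1
      (hζ.hasDerivWithinAt_Ici hGlip.continuous) hu₀G.1
      (hu₀G.hasDerivWithinAt_Ici hGlip.continuous) le_rfl t ht
    calc dist (ζ t) (u₀ t) ≤ dist (u 0) (u₀ 0) * exp (K * (t - 0)) := hζ0 ▸ this
      _ ≤ dist (u 0) (u₀ 0) * exp (K * τ) := by gcongr; linarith [ht.2]
      _ < exp (-(K * τ)) * exp (K * τ) := by gcongr
      _ = 1 := by rw [← exp_add]; simp
  have hζF : ∀ t ∈ Ico 0 τ, HasDerivWithinAt ζ (F (ζ t)) (Ici t) t := fun t ht => by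
    rw [← hGF (hball _ t (Ico_subset_Icc_self ht) (hclose t (Ico_subset_Icc_self ht)))]
    exact hζ.hasDerivWithinAt_Ici hGlip.continuous t ht
  have hu' := isSolutionOn_of_hasDerivAt hu le_rfl le_rfl
  rw [ODE_solution_unique_of_locallyLipschitz hF hu'.1
    (hu'.hasDerivWithinAt_Ici hF.continuous) hζ.1 hζF hζ0.symm ht]
  exact mem_closedBall_zero_iff.1 (hball _ t ht (hclose t ht))

theorem IsCompact.exists_forall_norm_le_of_hasDerivAt [ProperSpace E] (hF : LocallyLipschitz F)
    {Ω : Set E} (hΩ : IsCompact Ω) (hτ : 0 ≤ τ) {γ : E → ℝ → E} (hγ0 : ∀ x ∈ Ω, γ x 0 = x)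
    (hγ : ∀ x ∈ Ω, ∀ t ∈ Icc 0 τ, HasDerivAt (γ x) (F (γ x t)) t) :
    ∃ R, ∀ x ∈ Ω, ∀ t ∈ Icc 0 τ, ‖γ x t‖ ≤ R := by
  refine hΩ.induction_on (p := fun s => ∃ R, ∀ x ∈ s, ∀ t ∈ Icc 0 τ, ‖γ x t‖ ≤ R)
    ⟨0, by simp⟩ (fun s s' hss' ⟨R, hR⟩ => ⟨R, fun x hx => hR x (hss' hx)⟩)
    (fun s s' ⟨R, hR⟩ ⟨R', hR'⟩ => ⟨max R R', ?_⟩) fun x₀ hx₀ => ?_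
  · rintro x (hx | hx) t ht
    exacts [(hR x hx t ht).trans (le_max_left _ _), (hR' x hx t ht).trans (le_max_right _ _)]
  obtain ⟨δ, hδ, R, hR⟩ := exists_pos_forall_norm_le_of_dist_lt hF hτ (hγ x₀ hx₀)
  refine ⟨Ω ∩ ball x₀ δ, inter_mem_nhdsWithin _ (ball_mem_nhds _ hδ), R, ?_⟩
  rintro y ⟨hy, hyx₀⟩
  exact hR _ (hγ y hy) (by rwa [hγ0 y hy, hγ0 x₀ hx₀])

end Trajectories

section Discrete

variable {E : Type*} [NormedAddCommGroup E] [NormedSpace ℝ E] {K M : ℝ≥0}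

/-- Composing the steps `z j ↦ z (j + 1)` agrees to second order with a single Euler step of the
field `∑ j, w j • G j`. -/
theorem norm_sub_sub_sum_smul_le {z : ℕ → E} {w : ℕ → ℝ} {G : ℕ → E → E}
    (hG : ∀ j, LipschitzWith K (G j)) (hw : ∀ j, 0 ≤ w j) (m : ℕ)
    (hstep : ∀ j < m, ‖z (j + 1) - z j - w j • G j (z j)‖ ≤ K * M * w j ^ 2)
    (hmove : ∀ j < m, ‖z (j + 1) - z j‖ ≤ M * w j) :
    ‖z m - z 0 - ∑ j ∈ range m, w j • G j (z 0)‖ ≤ K * M * (∑ j ∈ range m, w j) ^ 2 := by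
  induction m with
  | zero => simp
  | succ m ih =>
    set W := ∑ j ∈ range m, w j
    have hW : 0 ≤ W := sum_nonneg fun j _ => hw j
    have hzm : ‖z m - z 0‖ ≤ M * W := by
      have := dist_le_range_sum_of_dist_le (f := z) (d := fun j => M * w j) m fun {k} hk => by
        rw [dist_comm, dist_eq_norm]; exact hmove k (by omega)
      rwa [dist_comm, dist_eq_norm, ← mul_sum] at this
    have hG' : ‖w m • (G m (z m) - G m (z 0))‖ ≤ w m * (K * (M * W)) := by
      rw [norm_smul, Real.norm_of_nonneg (hw m)]
      exact mul_le_mul_of_nonneg_left (((hG m).norm_sub_le _ _).trans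
        (mul_le_mul_of_nonneg_left hzm K.coe_nonneg)) (hw m)
    calc ‖z (m + 1) - z 0 - ∑ j ∈ range (m + 1), w j • G j (z 0)‖
        = ‖(z (m + 1) - z m - w m • G m (z m)) + (z m - z 0 - ∑ j ∈ range m, w j • G j (z 0))
            + w m • (G m (z m) - G m (z 0))‖ := by
          rw [sum_range_succ, smul_sub]; congr 1; abel
      _ ≤ K * M * w m ^ 2 + K * M * W ^ 2 + w m * (K * (M * W)) :=
          norm_add₃_le.trans (add_le_add_three (hstep m (by omega))
            (ih (fun j hj => hstep j (by omega)) fun j hj => hmove j (by omega)) hG')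
      _ ≤ K * M * (∑ j ∈ range (m + 1), w j) ^ 2 := by
          rw [sum_range_succ]
          nlinarith [mul_nonneg (mul_nonneg (mul_nonneg K.coe_nonneg M.coe_nonneg) hW) (hw m)]

theorem norm_sub_le_of_norm_sub_sub_smul_le {Φ : E → E} {L : ℝ≥0} (hΦ : LipschitzWith L Φ)
    {h δ₁ δ₂ : ℝ} (hh : 0 ≤ h) {p p' q q' : E} (hp : ‖p' - p - h • Φ p‖ ≤ δ₁)
    (hq : ‖q' - q - h • Φ q‖ ≤ δ₂) : ‖p' - q'‖ ≤ (1 + h * L) * ‖p - q‖ + δ₁ + δ₂ := by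
  have hΦpq : ‖h • (Φ p - Φ q)‖ ≤ h * (L * ‖p - q‖) := by
    rw [norm_smul, Real.norm_of_nonneg hh]
    exact mul_le_mul_of_nonneg_left (hΦ.norm_sub_le p q) hh
  calc ‖p' - q'‖ = ‖(p - q) + h • (Φ p - Φ q) + (p' - p - h • Φ p) - (q' - q - h • Φ q)‖ := by
        congr 1; rw [smul_sub]; abel
    _ ≤ ‖p - q‖ + h * (L * ‖p - q‖) + δ₁ + δ₂ :=
        (norm_sub_le _ _).trans (add_le_add ((norm_add_le _ _).trans
          (add_le_add ((norm_add_le _ _).trans (add_le_add le_rfl hΦpq)) hp)) hq)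
    _ = (1 + h * L) * ‖p - q‖ + δ₁ + δ₂ := by ring

theorem le_mul_exp_of_le_one_add_mul_add {e : ℕ → ℝ} {β δ : ℝ} {n : ℕ} (hβ : 0 ≤ β)
    (hδ : 0 ≤ δ) (h0 : e 0 = 0) (he : ∀ c < n, e (c + 1) ≤ (1 + β) * e c + δ) :
    ∀ c ≤ n, e c ≤ c * δ * exp (c * β) := by
  intro c hc
  induction c with
  | zero => simp [h0]
  | succ c ih =>
    have hexp : (1 + β) * exp (c * β) ≤ exp ((c + 1 : ℕ) * β) :=
      calc (1 + β) * exp (c * β) ≤ exp β * exp (c * β) := by gcongr; linarith [add_one_le_exp β]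
        _ = exp ((c + 1 : ℕ) * β) := by rw [← exp_add]; push_cast; ring_nf
    have hone : 1 ≤ exp ((c + 1 : ℕ) * β) := one_le_exp (by positivity)
    calc e (c + 1) ≤ (1 + β) * (c * δ * exp (c * β)) + δ :=
          (he c hc).trans (add_le_add_left (mul_le_mul_of_nonneg_left (ih (by omega))
            (by linarith)) δ)
      _ = c * δ * ((1 + β) * exp (c * β)) + δ := by ring
      _ ≤ c * δ * exp ((c + 1 : ℕ) * β) + δ * exp ((c + 1 : ℕ) * β) :=
          add_le_add (mul_le_mul_of_nonneg_left hexp (by positivity))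
            (le_mul_of_one_le_right hδ hone)
      _ = (c + 1 : ℕ) * δ * exp ((c + 1 : ℕ) * β) := by push_cast; ring

theorem le_div_of_le_one_add_mul_add {e : ℕ → ℝ} {L B τ : ℝ} {n : ℕ} (hL : 0 ≤ L) (hB : 0 ≤ B)
    (hτ : 0 ≤ τ) (h0 : e 0 = 0)
    (he : ∀ c < n, e (c + 1) ≤ (1 + τ / n * L) * e c + B * (τ / n) ^ 2) :
    ∀ c ≤ n, e c ≤ B * τ ^ 2 * exp (L * τ) / n := by
  intro c hc
  rcases n.eq_zero_or_pos with rfl | hn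
  · simp [Nat.le_zero.1 hc, h0]
  have hn' : (n : ℝ) ≠ 0 := (Nat.cast_pos.2 hn).ne'
  calc e c ≤ c * (B * (τ / n) ^ 2) * exp (c * (τ / n * L)) :=
        le_mul_exp_of_le_one_add_mul_add (by positivity) (by positivity) h0 he c hc
    _ ≤ n * (B * (τ / n) ^ 2) * exp (n * (τ / n * L)) := by
        have : (c : ℝ) ≤ n := Nat.cast_le.2 hc
        gcongr
    _ = B * τ ^ 2 * exp (L * τ) / n := by
        rw [show (n : ℝ) * (τ / n * L) = L * τ by field_simp]
        field_simp

end Discrete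

section Splitting

variable {E : Type*} [NormedAddCommGroup E] [NormedSpace ℝ E] {K M : ℝ≥0} {m : ℕ} (hm : 0 < m)

def cyclicIndex (k : ℕ) : Fin m := ⟨k % m, Nat.mod_lt k hm⟩

theorem cyclicIndex_mul_add (c j : ℕ) : cyclicIndex hm (m * c + j) = cyclicIndex hm j :=
  Fin.ext (Nat.mul_add_mod_self_left m c j)

theorem sum_range_cyclicIndex {β : Type*} [AddCommMonoid β] (φ : Fin m → β) :
    ∑ j ∈ range m, φ (cyclicIndex hm j) = ∑ i, φ i := by
  rw [← Fin.sum_univ_eq_sum_range]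
  exact sum_congr rfl fun i _ => congrArg φ (Fin.ext (Nat.mod_eq_of_lt i.isLt))

variable {a : Fin m → ℝ} {h : ℝ} {σ : ℕ → ℝ}

theorem sum_range_mul_add_of_cyclic (hσ : ∀ k, σ k = a (cyclicIndex hm k) * h) (c j : ℕ) :
    ∑ k ∈ range (m * c + j), σ k =
      ∑ k ∈ range (m * c), σ k + ∑ k ∈ range j, a (cyclicIndex hm k) * h := by
  rw [sum_range_add]
  simp only [hσ, cyclicIndex_mul_add]

theorem sum_range_mul_of_cyclic (hσ : ∀ k, σ k = a (cyclicIndex hm k) * h) (c : ℕ) :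
    ∑ k ∈ range (m * c), σ k = c * ((∑ i, a i) * h) := by
  induction c with
  | zero => simp
  | succ c ih =>
    rw [Nat.mul_succ, sum_range_mul_add_of_cyclic hm hσ, ih, ← sum_mul,
      sum_range_cyclicIndex hm a]
    push_cast; ring

theorem norm_cycle_sub_sub_smul_le {G : Fin m → E → E} (hG : ∀ i, LipschitzWith K (G i))
    (hGM : ∀ i x, ‖G i x‖ ≤ M) (ha : ∀ i, 0 ≤ a i) (hh : 0 ≤ h) {η : ℝ → E} {s : ℝ}
    (hη : ∀ j < m, IsSolutionOn (G (cyclicIndex hm j)) η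
      (s + ∑ k ∈ range j, a (cyclicIndex hm k) * h)
      (s + ∑ k ∈ range (j + 1), a (cyclicIndex hm k) * h)) :
    ‖η (s + (∑ i, a i) * h) - η s - h • ∑ i, a i • G i (η s)‖ ≤
      K * M * ((∑ i, a i) * h) ^ 2 := by
  have hw : ∀ k, 0 ≤ a (cyclicIndex hm k) * h := fun k => mul_nonneg (ha _) hh
  have hlen : ∀ j, s + ∑ k ∈ range (j + 1), a (cyclicIndex hm k) * h -
      (s + ∑ k ∈ range j, a (cyclicIndex hm k) * h) = a (cyclicIndex hm j) * h := fun j => by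
    rw [sum_range_succ]; ring
  have := norm_sub_sub_sum_smul_le (z := fun j => η (s + ∑ k ∈ range j, a (cyclicIndex hm k) * h))
    (fun j => hG (cyclicIndex hm j)) hw m
    (fun j hj => by
      simpa only [hlen] using (hη j hj).norm_sub_sub_smul_le
        (by linarith [hlen j, hw j]) (hG _) (hGM _))
    (fun j hj => by
      simpa only [hlen] using (hη j hj).norm_sub_le (hG _).continuous (hGM _) _
        ⟨by linarith [hlen j, hw j], le_rfl⟩)
  rw [sum_range_zero, add_zero, sum_range_cyclicIndex hm (fun i => a i * h), ← sum_mul,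
    sum_range_cyclicIndex hm (fun i => (a i * h) • G i (η s))] at this
  simpa only [smul_sum, smul_smul, mul_comm h] using this

theorem norm_sub_le_of_cyclic_isSolutionOn {G : Fin m → E → E} (hG : ∀ i, LipschitzWith K (G i))
    (hGM : ∀ i x, ‖G i x‖ ≤ M) (ha : ∀ i, 0 ≤ a i) {τ : ℝ} (hτ : 0 ≤ τ) {n : ℕ}
    (hσ : ∀ k, σ k = a (cyclicIndex hm k) * (τ / n)) {η γ : ℝ → E}
    (hη : ∀ k < m * n, IsSolutionOn (G (cyclicIndex hm k)) η (∑ j ∈ range k, σ j)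
      (∑ j ∈ range (k + 1), σ j))
    (hγ : ∀ t ∈ Icc 0 τ, HasDerivAt γ (∑ i, a i • G i (γ t)) t) (h0 : η 0 = γ 0) :
    ∀ c ≤ n, ‖η (∑ j ∈ range (m * c), σ j) - γ (c * (τ / n))‖ ≤
      2 * K * M * (∑ i, a i) ^ 2 * τ ^ 2 * exp ((∑ i, a i) * K * τ) / n := by
  set A := ∑ i, a i
  set h := τ / n
  have hh : 0 ≤ h := by positivity
  have hA : ∑ i, ‖a i‖ = A := sum_congr rfl fun i _ => Real.norm_of_nonneg (ha i)
  have hA0 : 0 ≤ A := sum_nonneg fun i _ => ha i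
  have hFlip := lipschitzWith_sum_smul univ a hG
  refine le_div_of_le_one_add_mul_add (by positivity) (by positivity) hτ (by simp [h0])
    fun c hc => ?_
  set s := ∑ j ∈ range (m * c), σ j
  have hcycle := norm_cycle_sub_sub_smul_le hm hG hGM ha hh (η := η) (s := s) fun j hj => by
    have := hη (m * c + j) (by nlinarith)
    rwa [add_assoc, sum_range_mul_add_of_cyclic hm hσ, sum_range_mul_add_of_cyclic hm hσ,
      cyclicIndex_mul_add] at this
  have hend : ∑ j ∈ range (m * (c + 1)), σ j = s + A * h := by
    rw [Nat.mul_succ, sum_range_mul_add_of_cyclic hm hσ,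
      sum_range_cyclicIndex hm (fun i => a i * h), sum_mul]
  have hγstep := (isSolutionOn_of_hasDerivAt hγ (a := c * h) (b := c * h + h) (by positivity)
    (by
      rw [← add_one_mul, ← mul_div_cancel₀ τ (Nat.cast_ne_zero.2 (by omega : n ≠ 0))]
      gcongr; exact_mod_cast hc)).norm_sub_sub_smul_le (by linarith)
      hFlip (norm_sum_smul_le univ a hGM)
  rw [add_sub_cancel_left] at hγstep
  have := norm_sub_le_of_norm_sub_sub_smul_le hFlip hh hcycle hγstep
  push_cast at this ⊢
  rw [hA] at this
  rw [hend, add_one_mul]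
  linarith

end Splitting

section Piecewise

variable {d n : ℕ} {g : ℕ → Euc d → Euc d} {σ : ℕ → ℝ} {x : Euc d} {η : ℝ → Euc d}

theorem IsPiecewiseSolution.isSolutionOn (hσ : ∀ k, 0 ≤ σ k)
    (hη : IsPiecewiseSolution n g σ x η) {k : ℕ} (hk : k < n) :
    IsSolutionOn (g k) η (∑ j ∈ range k, σ j) (∑ j ∈ range (k + 1), σ j) :=
  ⟨hη.1.mono (Icc_subset_Icc (sum_nonneg fun j _ => hσ j)
    (sum_le_sum_of_subset_of_nonneg (range_subset_range.2 hk) fun j _ _ => hσ j)), hη.2.2 k hk⟩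

theorem exists_isPiecewiseSolution (hσ : ∀ k, 0 ≤ σ k)
    (hg : ∀ k z a b, a ≤ b → ∃ u, u a = z ∧ IsSolutionOn (g k) u a b) (n : ℕ) (x : Euc d) :
    ∃ η, IsPiecewiseSolution n g σ x η := by
  induction n with
  | zero => exact ⟨fun _ => x, continuousOn_const, rfl, fun i hi => absurd hi (Nat.not_lt_zero i)⟩
  | succ n ih =>
    obtain ⟨η, hηc, hη0, hη⟩ := ih
    set T := ∑ j ∈ range n, σ j
    have hT : 0 ≤ T := sum_nonneg fun j _ => hσ j
    have hT' : ∑ j ∈ range (n + 1), σ j = T + σ n := sum_range_succ _ _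
    obtain ⟨u, hu0, hu⟩ := hg n (η T) T (T + σ n) (by linarith [hσ n])
    refine ⟨fun s => if s ≤ T then η s else u s, ?_, by simp [hT, hη0], fun i hi s hs => ?_⟩
    · rw [hT', ← Icc_union_Icc_eq_Icc hT (by linarith [hσ n])]
      refine (hηc.congr fun s hs => if_pos hs.2).union_of_isClosed
        (hu.1.congr fun s hs => ?_) isClosed_Icc isClosed_Icc
      split_ifs with h
      · rw [le_antisymm h hs.1, hu0]
      · rfl
    rcases Nat.lt_succ_iff_lt_or_eq.1 hi with hi | rfl
    · have hsT : s < T := hs.2.trans_le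
        (sum_le_sum_of_subset_of_nonneg (range_subset_range.2 hi) fun j _ _ => hσ j)
      have hev : (fun s => if s ≤ T then η s else u s) =ᶠ[𝓝 s] η := by
        filter_upwards [Iio_mem_nhds hsT] with r hr using if_pos hr.le
      beta_reduce; rw [hev.eq_of_nhds]
      exact (hη i hi s hs).congr_of_eventuallyEq hev
    · have hev : (fun s => if s ≤ T then η s else u s) =ᶠ[𝓝 s] u := by
        filter_upwards [Ioi_mem_nhds hs.1] with r hr using if_neg (not_le.2 hr)
      beta_reduce; rw [hev.eq_of_nhds]
      exact (hu.2 s (hT' ▸ hs)).congr_of_eventuallyEq hev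

end Piecewise

theorem exists_isPiecewiseSolution_cyclic {d m : ℕ} (hm : 0 < m) {G : Fin m → Euc d → Euc d}
    {K M : ℝ≥0} (hG : ∀ i, LipschitzWith K (G i)) (hGM : ∀ i x, ‖G i x‖ ≤ M) {a : Fin m → ℝ}
    (ha : ∀ i, 0 ≤ a i) {τ : ℝ} (hτ : 0 ≤ τ) :
    ∃ C, ∀ n : ℕ, 0 < n → ∀ σ : ℕ → ℝ, (∀ k, σ k = a (cyclicIndex hm k) * (τ / n)) →
      ∀ γ : ℝ → Euc d, (∀ t ∈ Icc 0 τ, HasDerivAt γ (∑ i, a i • G i (γ t)) t) →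
      ∃ η, IsPiecewiseSolution (m * n) (fun k => G (cyclicIndex hm k)) σ (γ 0) η ∧
        ‖η (∑ j ∈ range (m * n), σ j) - γ τ‖ ≤ C / n ∧
        ∀ k < m * n, ∀ s ∈ Ioo (∑ j ∈ range k, σ j) (∑ j ∈ range (k + 1), σ j),
          ∃ r ∈ Icc 0 τ, ‖η s - γ r‖ ≤ C / n := by
  set A := ∑ i, a i
  have hA0 : 0 ≤ A := sum_nonneg fun i _ => ha i
  set C₀ := 2 * K * M * A ^ 2 * τ ^ 2 * exp (A * K * τ)
  refine ⟨C₀ + M * A * τ, fun n hn σ hσ γ hγ => ?_⟩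
  have hn' : (0 : ℝ) < n := Nat.cast_pos.2 hn
  have hnh : n * (τ / n) = τ := mul_div_cancel₀ τ hn'.ne'
  have hσ0 : ∀ k, 0 ≤ σ k := fun k => hσ k ▸ mul_nonneg (ha _) (by positivity)
  obtain ⟨η, hη⟩ := exists_isPiecewiseSolution hσ0
    (fun k z _ _ hab => exists_isSolutionOn (hG _) (hGM _) z hab) (m * n) (γ 0)
  have hpieces := fun k (hk : k < m * n) => hη.isSolutionOn hσ0 hk
  have herr := norm_sub_le_of_cyclic_isSolutionOn hm hG hGM ha hτ hσ hpieces hγ hη.2.1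
  refine ⟨η, hη, ?_, fun k hk s hs => ?_⟩
  · refine (hnh ▸ herr n le_rfl).trans ?_
    gcongr
    exact le_add_of_nonneg_right (by positivity)
  have hc : k / m < n := Nat.div_lt_of_lt_mul hk
  refine ⟨(k / m : ℕ) * (τ / n), ⟨by positivity, ?_⟩, ?_⟩
  · calc (k / m : ℕ) * (τ / n) ≤ n * (τ / n) := by gcongr
      _ = τ := hnh
  have ht : Monotone fun k => ∑ j ∈ range k, σ j :=
    monotone_nat_of_le_succ fun k => by rw [sum_range_succ]; linarith [hσ0 k]
  have hmove := norm_sub_le_of_forall_isSolutionOn ht (fun k => (hG _).continuous)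
    (fun k => hGM _) hpieces (Nat.mul_div_le k m) hk s (Ioo_subset_Icc_self hs)
  have hlen : s - ∑ j ∈ range (m * (k / m)), σ j ≤ A * (τ / n) := by
    have := ht (Nat.lt_mul_div_succ k hm)
    simp only [sum_range_mul_of_cyclic hm hσ] at this ⊢
    push_cast at this
    linarith [hs.2]
  calc ‖η s - γ ((k / m : ℕ) * (τ / n))‖
      ≤ ‖η s - η (∑ j ∈ range (m * (k / m)), σ j)‖ +
        ‖η (∑ j ∈ range (m * (k / m)), σ j) - γ ((k / m : ℕ) * (τ / n))‖ :=
        norm_sub_le_norm_sub_add_norm_sub _ _ _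
    _ ≤ M * (A * (τ / n)) + C₀ / n := add_le_add (hmove.trans (by gcongr)) (herr _ hc.le)
    _ = (C₀ + M * A * τ) / n := by field_simp; ring

theorem splitting_approximation_general
    (d : ℕ) (m : ℕ) (hm : 0 < m)
    (f : Fin m → Euc d → Euc d) (hf : ∀ i, LocallyLipschitz (f i))
    (a : Fin m → ℝ) (ha : ∀ i, 0 < a i)
    (τ : ℝ) (hτ : 0 ≤ τ) (Ω : Set (Euc d)) (hΩ : IsCompact Ω)
    (γ : Euc d → ℝ → Euc d)
    (hγ0 : ∀ x ∈ Ω, γ x 0 = x)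
    (hγ : ∀ x ∈ Ω, ∀ t ∈ Set.Icc (0 : ℝ) τ,
      HasDerivAt (γ x) (∑ i, a i • f i (γ x t)) t)
    (ε : ℝ) (hε : 0 < ε) :
    ∃ n : ℕ, 0 < n ∧ ∀ x ∈ Ω, ∃ η : ℝ → Euc d,
      IsPiecewiseSolution (m * n) (fun k => f ⟨k % m, Nat.mod_lt k hm⟩)
        (fun k => a ⟨k % m, Nat.mod_lt k hm⟩ * τ / n) x η ∧
      ‖η (∑ j ∈ Finset.range (m * n), a ⟨j % m, Nat.mod_lt j hm⟩ * τ / n) - γ x τ‖ ≤ ε := by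
  obtain ⟨R, hR⟩ := hΩ.exists_forall_norm_le_of_hasDerivAt (locallyLipschitz_sum_smul univ a hf)
    hτ hγ0 hγ
  obtain ⟨g, K, M, hg⟩ := exists_forall_lipschitzWith_bounded_eqOn_closedBall hf
    (R := |R| + 1) (by positivity)
  obtain ⟨C, hC⟩ := exists_isPiecewiseSolution_cyclic hm (fun i => (hg i).1) (fun i => (hg i).2.1)
    (fun i => (ha i).le) hτ
  obtain ⟨n, hn0, hn⟩ := ((eventually_gt_atTop 0).and
    ((tendsto_const_div_atTop_nhds_zero_nat C).eventually (ge_mem_nhds (lt_min hε one_pos)))).exists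
  refine ⟨n, hn0, fun x hx => ?_⟩
  have hball : ∀ t ∈ Icc 0 τ, γ x t ∈ closedBall 0 (|R| + 1) := fun t ht =>
    mem_closedBall_zero_iff.2 ((hR x hx t ht).trans (by linarith [le_abs_self R]))
  obtain ⟨η, hη, herr, hnear⟩ := hC n hn0 _ (fun k => mul_div_assoc _ _ _) (γ x) fun t ht => by
    simpa only [fun i => (hg i).2.2 (hball t ht)] using hγ x hx t ht
  refine ⟨η, ⟨hη.1, hγ0 x hx ▸ hη.2.1, fun k hk s hs => ?_⟩,
    herr.trans (hn.trans (min_le_left _ _))⟩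
  obtain ⟨r, hr, hηr⟩ := hnear k hk s hs
  have hηs : η s ∈ closedBall 0 (|R| + 1) := by
    rw [mem_closedBall_zero_iff]
    linarith [norm_le_norm_add_norm_sub' (η s) (γ x r), hR x hx r hr, le_abs_self R,
      hηr.trans (hn.trans (min_le_right _ _))]
  show HasDerivAt η (f (cyclicIndex hm k) (η s)) s
  rw [← (hg _).2.2 hηs]
  exact hη.2.2 k hk s hs

/-- operator splitting: the flow of `f = a₁ f₁ + ⋯ + a_m f_m` is approximated by
cycling `n` times through the flows of `f₁, …, f_m` for times `a₁ τ/n, …, a_m τ/n`. -/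
theorem splitting_approximation
    (d : ℕ) (hd : 1 ≤ d) (m : ℕ) (hm : 0 < m)
    (f : Fin m → Euc d → Euc d) (hf : ∀ i, LocallyLipschitz (f i))
    (a : Fin m → ℝ) (ha : ∀ i, 0 < a i)
    (τ : ℝ) (hτ : 0 ≤ τ) (Ω : Set (Euc d)) (hΩ : IsCompact Ω)
    (γ : Euc d → ℝ → Euc d)
    (hγ0 : ∀ x ∈ Ω, γ x 0 = x)
    (hγ : ∀ x ∈ Ω, ∀ t ∈ Set.Icc (0 : ℝ) τ,
      HasDerivAt (γ x) (∑ i, a i • f i (γ x t)) t)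
    (ε : ℝ) (hε : 0 < ε) :
    ∃ n : ℕ, 0 < n ∧ ∀ x ∈ Ω, ∃ η : ℝ → Euc d,
      IsPiecewiseSolution (m * n) (fun k => f ⟨k % m, Nat.mod_lt k hm⟩)
        (fun k => a ⟨k % m, Nat.mod_lt k hm⟩ * τ / n) x η ∧
      ‖η (∑ j ∈ Finset.range (m * n), a ⟨j % m, Nat.mod_lt j hm⟩ * τ / n) - γ x τ‖ ≤ ε :=
  splitting_approximation_general d m hm f hf a ha τ hτ Ω hΩ γ hγ0 hγ ε hε
end
end

section
/- Let f : ℝ → ℝ be continuous and not a polynomial function. Then there exists c ∈ ℝ such that the function x ↦ f(x + c) − f(x) is not a polynomial function. -/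
/-!
Suppose every difference `Δ_c f = f(· + c) - f` is a polynomial `p c`. Since difference operators
commute, `Δ_1 (p c) = Δ_c (p 1)`, so `deg (p c) ≤ deg (p 1) + 1` for all `c`. Polynomials of
bounded degree are determined linearly by their values at finitely many nodes, so averaging over
`c ∈ [0, 1]` shows that `x ↦ ∫₀¹ f(x + t) dt - f x` is a polynomial `Q`. By the fundamental
theorem of calculus, `x ↦ ∫₀¹ f(x + t) dt` has derivative `Δ_1 f = p 1`; hence `f' = p 1 - Q'` is
a polynomial, and so is `f`.
-/

open Polynomial fwdDiff MeasureTheory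

namespace Polynomial

section Field

variable {K : Type*} [Field K] [CharZero K]

theorem exists_derivative_eq (q : K[X]) : ∃ r : K[X], derivative r = q := by
  induction q using Polynomial.induction_on' with
  | add p q hp hq =>
    obtain ⟨P, rfl⟩ := hp
    obtain ⟨Q, rfl⟩ := hq
    exact ⟨P + Q, derivative_add⟩
  | monomial n a =>
    refine ⟨monomial (n + 1) (a / (n + 1)), ?_⟩
    rw [derivative_monomial_succ, div_mul_cancel₀ _ (Nat.cast_add_one_ne_zero n)]

theorem eval_eq_sum_range_eval_mul_basis {p : K[X]} {N : ℕ} (hp : p.natDegree ≤ N) (x : K) :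
    p.eval x = ∑ i ∈ Finset.range (N + 1),
      p.eval (i : K) * (Lagrange.basis (Finset.range (N + 1)) (Nat.cast : ℕ → K) i).eval x := by
  have hdeg : p.degree < (Finset.range (N + 1)).card := by
    rw [Finset.card_range]
    exact degree_le_natDegree.trans_lt (by exact_mod_cast Nat.lt_succ_of_le hp)
  conv_lhs => rw [Lagrange.eq_interpolate Nat.cast_injective.injOn hdeg]
  simp only [Lagrange.interpolate_apply, eval_finsetSum, eval_mul, eval_C]

end Field

section Domain

variable {R : Type*} [CommRing R] [IsDomain R] [CharZero R]

theorem natDegree_le_of_fwdDiff_eval_eq {P Q : R[X]} (h : Δ_[1] P.eval = Q.eval) :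
    P.natDegree ≤ Q.natDegree + 1 := by
  by_contra! hlt
  obtain ⟨k, hk⟩ : ∃ k, P.natDegree = k + 1 := Nat.exists_eq_succ_of_ne_zero (by omega)
  have hP : P ≠ 0 := by rintro rfl; simp at hk
  have hzero : (Δ_[1])^[P.natDegree] P.eval = 0 := by
    rw [hk, Function.iterate_succ_apply, h]
    exact fwdDiff_iter_eq_zero_of_degree_lt (by omega)
  have := congrFun (P.fwdDiff_iter_degree_eq_factorial.symm.trans hzero) 0
  simp [hP, Nat.factorial_ne_zero] at this

theorem natDegree_le_of_shift_sub_eq_eval {f : R → R} {p : R → R[X]}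
    (hp : ∀ c x, f (x + c) - f x = (p c).eval x) (c : R) :
    (p c).natDegree ≤ (p 1).natDegree + 1 := by
  have hcomm : Δ_[1] (p c).eval = (taylor c (p 1) - p 1).eval := by
    funext x
    simp only [fwdDiff, eval_sub, taylor_eval, ← hp]
    ring_nf
  calc (p c).natDegree ≤ (taylor c (p 1) - p 1).natDegree + 1 :=
        natDegree_le_of_fwdDiff_eval_eq hcomm
    _ ≤ (p 1).natDegree + 1 := by
        gcongr
        exact (natDegree_sub_le _ _).trans (by rw [natDegree_taylor, max_self])

end Domain

end Polynomial

theorem exists_eval_eq_integral_of_natDegree_le {a b : ℝ} {p : ℝ → ℝ[X]} {N : ℕ}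
    (hdeg : ∀ t, (p t).natDegree ≤ N)
    (hint : ∀ x, IntervalIntegrable (fun t => (p t).eval x) volume a b) :
    ∃ Q : ℝ[X], ∀ x, ∫ t in a..b, (p t).eval x = Q.eval x := by
  refine ⟨∑ i ∈ Finset.range (N + 1), C (∫ t in a..b, (p t).eval (i : ℝ)) *
    Lagrange.basis (Finset.range (N + 1)) (Nat.cast : ℕ → ℝ) i, fun x => ?_⟩
  simp_rw [eval_eq_sum_range_eval_mul_basis (hdeg _) x]
  rw [intervalIntegral.integral_finsetSum fun i _ => (hint _).mul_const _]
  simp only [eval_finsetSum, eval_mul, eval_C, intervalIntegral.integral_mul_const]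

theorem hasDerivAt_integral_comp_add {E : Type*} [NormedAddCommGroup E] [NormedSpace ℝ E]
    [CompleteSpace E] {f : ℝ → E} (hf : Continuous f) (h x : ℝ) :
    HasDerivAt (fun y => ∫ t in (0 : ℝ)..h, f (y + t)) (f (x + h) - f x) x := by
  have hF := fun u => (hf.integral_hasStrictDerivAt 0 u).hasDerivAt
  have heq : (fun y => ∫ t in (0 : ℝ)..h, f (y + t)) =
      fun y => (∫ t in (0 : ℝ)..y + h, f t) - ∫ t in (0 : ℝ)..y, f t := by
    funext y
    rw [intervalIntegral.integral_comp_add_left, add_zero,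
      intervalIntegral.integral_interval_sub_left (hf.intervalIntegrable _ _)
        (hf.intervalIntegrable _ _)]
  rw [heq]
  exact ((hF (x + h)).comp_add_const x h).sub (hF x)

theorem exists_eval_eq_of_hasDerivAt {f : ℝ → ℝ} {q : ℝ[X]}
    (hf : ∀ x, HasDerivAt f (q.eval x) x) : ∃ p : ℝ[X], ∀ x, f x = p.eval x := by
  obtain ⟨r, rfl⟩ := q.exists_derivative_eq
  have hzero : ∀ x, HasDerivAt (fun y => f y - r.eval y) 0 x := fun x => by
    simpa only [sub_self] using (hf x).fun_sub (r.hasDerivAt x)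
  have hconst : ∀ x, f x - r.eval x = f 0 - r.eval 0 := fun x =>
    is_const_of_deriv_eq_zero (fun y => (hzero y).differentiableAt) (fun y => (hzero y).deriv) x 0
  exact ⟨r + C (f 0 - r.eval 0), fun x => by rw [eval_add, eval_C, ← hconst x]; ring⟩

/-- if `f : ℝ → ℝ` is continuous and not a polynomial function, then there is a
shift `c` such that `x ↦ f(x + c) − f(x)` is not a polynomial function either. -/
theorem exists_shift_difference_not_polynomial
    (f : ℝ → ℝ) (hf : Continuous f)
    (hnp : ¬ ∃ p : Polynomial ℝ, ∀ x : ℝ, f x = p.eval x) :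
    ∃ c : ℝ, ¬ ∃ p : Polynomial ℝ, ∀ x : ℝ, f (x + c) - f x = p.eval x := by
  by_contra! hshift
  choose p hp using hshift
  have hint : ∀ x, IntervalIntegrable (fun t => f (x + t) - f x) volume 0 1 := fun x =>
    ((hf.comp (continuous_const_add x)).sub continuous_const).intervalIntegrable 0 1
  obtain ⟨Q, hQ⟩ := exists_eval_eq_integral_of_natDegree_le
    (natDegree_le_of_shift_sub_eq_eval hp) fun x => by simpa only [← hp] using hint x
  have hsplit : ∀ x, f x = (∫ t in (0 : ℝ)..1, f (x + t)) - Q.eval x := fun x => by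
    rw [← hQ x]
    simp only [← hp]
    rw [intervalIntegral.integral_sub (f := fun t => f (x + t))
      ((hf.comp (continuous_const_add x)).intervalIntegrable 0 1) intervalIntegrable_const]
    simp
  refine hnp (exists_eval_eq_of_hasDerivAt (q := p 1 - derivative Q) fun x => ?_)
  rw [eval_sub, ← hp 1 x]
  exact ((hasDerivAt_integral_comp_add hf 1 x).sub (Q.hasDerivAt x)).congr_of_eventuallyEq
    (.of_forall hsplit)
end

section
/- Let f : ℝ → ℝ be continuous, let c ≠ 0, and suppose the function x ↦ f(x + c) − f(x) is a polynomial function. Then there exist a polynomial Q ∈ ℝ[X] and a continuous function g : ℝ → ℝ with g(x + c) = g(x) for all x ∈ ℝ, such that f(x) = g(x) + Q(x) for all x ∈ ℝ. -/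
/-!
Over a field of characteristic zero the difference operator `Q ↦ Q(X + c) - Q` with `c ≠ 0` is
surjective on polynomials: the identity `Bₙ₊₁(x + 1) - Bₙ₊₁(x) = (n + 1) xⁿ` for Bernoulli
polynomials, rescaled by `c`, puts every monomial in its image. Choosing `Q` with
`Q(x + c) - Q(x) = f(x + c) - f(x)`, the function `f - Q` is continuous and `c`-periodic.
-/

open Polynomial

namespace Polynomial

variable {K : Type*} [Field K] [CharZero K]

theorem exists_comp_X_add_C_sub_eq_X_pow {c : K} (hc : c ≠ 0) (n : ℕ) :
    ∃ Q : K[X], Q.comp (X + C c) - Q = X ^ n := by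
  set B : K[X] := (bernoulli (n + 1)).map (algebraMap ℚ K)
  have hB : B.comp (1 + X) - B = C ((n : K) + 1) * X ^ n := by
    have := congrArg (map (algebraMap ℚ K)) (bernoulli_comp_one_add_X (n + 1))
    simp only [map_comp, Polynomial.map_add, Polynomial.map_one, map_X] at this
    rw [this, add_sub_cancel_left]
    simp [nsmul_eq_mul]
  have hscale : (C c⁻¹ * X).comp (X + C c) = (1 + X).comp (C c⁻¹ * X) := by
    simp [mul_add, ← C_mul, inv_mul_cancel₀ hc, add_comm]
  have hn : (n + 1 : K) ≠ 0 := by exact_mod_cast n.succ_ne_zero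
  refine ⟨C (c ^ n / (n + 1)) * B.comp (C c⁻¹ * X), ?_⟩
  calc (C (c ^ n / (n + 1)) * B.comp (C c⁻¹ * X)).comp (X + C c)
        - C (c ^ n / (n + 1)) * B.comp (C c⁻¹ * X)
      = C (c ^ n / (n + 1)) * (B.comp (1 + X) - B).comp (C c⁻¹ * X) := by
        rw [mul_comp, C_comp, comp_assoc, hscale, ← comp_assoc, sub_comp, mul_sub]
    _ = C (c ^ n / (n + 1) * (n + 1) * c⁻¹ ^ n) * X ^ n := by
        rw [hB, mul_comp, C_comp, X_pow_comp, mul_pow, ← C_pow, C_mul, C_mul]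
        ring
    _ = X ^ n := by
        rw [div_mul_cancel₀ _ hn, ← mul_pow, mul_inv_cancel₀ hc, one_pow, C_1, one_mul]

theorem exists_comp_X_add_C_sub_eq {c : K} (hc : c ≠ 0) (P : K[X]) :
    ∃ Q : K[X], Q.comp (X + C c) - Q = P := by
  induction P using Polynomial.induction_on' with
  | add P₁ P₂ h₁ h₂ =>
    obtain ⟨Q₁, hQ₁⟩ := h₁
    obtain ⟨Q₂, hQ₂⟩ := h₂
    exact ⟨Q₁ + Q₂, by rw [add_comp, ← hQ₁, ← hQ₂]; ring⟩
  | monomial n a =>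
    obtain ⟨Q, hQ⟩ := exists_comp_X_add_C_sub_eq_X_pow hc n
    exact ⟨C a * Q, by rw [mul_comp, C_comp, ← mul_sub, hQ, C_mul_X_pow_eq_monomial]⟩

end Polynomial

/-- if `f : ℝ → ℝ` is continuous, `c ≠ 0`, and `x ↦ f(x + c) − f(x)` is a
polynomial function, then `f` is the sum of a continuous `c`-periodic function and a polynomial
function. -/
theorem continuous_eq_periodic_add_polynomial
    (f : ℝ → ℝ) (hf : Continuous f) (c : ℝ) (hc : c ≠ 0)
    (hpoly : ∃ P : Polynomial ℝ, ∀ x : ℝ, f (x + c) - f x = P.eval x) :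
    ∃ (Q : Polynomial ℝ) (g : ℝ → ℝ), Continuous g ∧ (∀ x : ℝ, g (x + c) = g x) ∧
      ∀ x : ℝ, f x = g x + Q.eval x := by
  obtain ⟨P, hP⟩ := hpoly
  obtain ⟨Q, hQ⟩ := exists_comp_X_add_C_sub_eq hc P
  refine ⟨Q, fun x => f x - Q.eval x, hf.sub Q.continuous, fun x => ?_, fun x => by simp⟩
  have hQx : Q.eval (x + c) - Q.eval x = P.eval x := by simpa using congrArg (eval x) hQ
  linarith [hP x]
end

section
/- Let d ≥ 2 and let f : ℝ^d → ℝ be continuously differentiable and Lebesgue integrable, and suppose there exists C > 0 such that (1 + ‖x‖^d) ‖∇f(x)‖ ≤ C for all x ∈ ℝ^d. Assume furthermore that for every s ∈ ℝ the slice y ↦ f(s, y) is Lebesgue integrable on ℝ^{d−1}. Then the marginal function f̄ : ℝ → ℝ defined by f̄(s) = ∫_{ℝ^{d−1}} f(s, y) dy is globally Lipschitz; in fact it is K-Lipschitz with K = ∫_{ℝ^{d−1}} C/(1 + ‖y‖^d) dy, and this integral is finite. -/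
/-!
For fixed `y`, the mean value theorem along the line `s ↦ (s, y)` bounds
`|f (s₁, y) - f (s₂, y)|` by `|s₁ - s₂|` times the supremum of `‖∇f‖` on that line; since
`‖y‖ ≤ ‖(s, y)‖`, the decay of the gradient makes this supremum at most `C / (1 + ‖y‖ ^ d)`.
Integrating in `y` gives the Lipschitz bound. The weight is integrable on `ℝ^(d-1)` because
`(1 + ‖y‖) ^ d ≤ 2 ^ d (1 + ‖y‖ ^ d)` and `d > d - 1`.
-/

open MeasureTheory Module

lemma one_add_pow_le_two_pow_mul {r : ℝ} (hr : 0 ≤ r) (n : ℕ) :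
    (1 + r) ^ n ≤ 2 ^ n * (1 + r ^ n) := by
  calc (1 + r) ^ n ≤ 2 ^ (n - 1) * (1 ^ n + r ^ n) := add_pow_le zero_le_one hr n
    _ ≤ 2 ^ n * (1 + r ^ n) := by
      rw [one_pow]
      gcongr
      · norm_num
      · omega

lemma integrable_inv_one_add_norm_pow {E : Type*} [NormedAddCommGroup E] [NormedSpace ℝ E]
    [FiniteDimensional ℝ E] [MeasurableSpace E] [BorelSpace E] (μ : Measure E)
    [μ.IsAddHaarMeasure] {n : ℕ} (hn : finrank ℝ E < n) :
    Integrable (fun x : E => (1 + ‖x‖ ^ n)⁻¹) μ := by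
  have hnr : (finrank ℝ E : ℝ) < n := by exact_mod_cast hn
  refine ((integrable_one_add_norm hnr).const_mul (2 ^ n)).mono' (by fun_prop)
    (Filter.Eventually.of_forall fun x => ?_)
  rw [Real.norm_of_nonneg (by positivity), Real.rpow_neg (by positivity), Real.rpow_natCast,
    ← div_eq_mul_inv, inv_le_comm₀ (by positivity) (by positivity), inv_div,
    div_le_iff₀' (by positivity)]
  exact one_add_pow_le_two_pow_mul (norm_nonneg x) n

lemma norm_sub_le_of_norm_fderiv_le_on_line {E F : Type*} [NormedAddCommGroup E] [NormedSpace ℝ E]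
    [NormedAddCommGroup F] [NormedSpace ℝ F] {f : E → F} (hf : Differentiable ℝ f) (p v : E)
    {B : ℝ} (hB : ∀ t : ℝ, ‖fderiv ℝ f (p + t • v)‖ ≤ B) (t₁ t₂ : ℝ) :
    ‖f (p + t₁ • v) - f (p + t₂ • v)‖ ≤ B * ‖v‖ * |t₁ - t₂| := by
  have hderiv (t : ℝ) : HasDerivAt (fun t : ℝ => f (p + t • v)) (fderiv ℝ f (p + t • v) v) t := by
    have hline : HasDerivAt (fun t : ℝ => p + t • v) v t := by
      simpa using ((hasDerivAt_id t).smul_const v).const_add p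
    exact (hf _).hasFDerivAt.comp_hasDerivAt t hline
  have hbound (t : ℝ) : ‖fderiv ℝ f (p + t • v) v‖ ≤ B * ‖v‖ :=
    ((fderiv ℝ f _).le_opNorm v).trans (by gcongr; exact hB t)
  simpa [Real.norm_eq_abs] using convex_univ.norm_image_sub_le_of_norm_hasDerivWithin_le
    (fun t _ => (hderiv t).hasDerivWithinAt) (fun t _ => hbound t) (Set.mem_univ t₂)
    (Set.mem_univ t₁)

lemma norm_gradient_eq_norm_fderiv {F : Type*} [NormedAddCommGroup F] [InnerProductSpace ℝ F]
    [CompleteSpace F] (f : F → ℝ) (x : F) : ‖gradient f x‖ = ‖fderiv ℝ f x‖ := by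
  rw [← toDual_gradient, LinearIsometryEquiv.norm_map]

lemma le_div_one_add_pow_of_mul_le {a r R C : ℝ} {n : ℕ} (ha : 0 ≤ a) (hr : 0 ≤ r) (hrR : r ≤ R)
    (h : (1 + R ^ n) * a ≤ C) : a ≤ C / (1 + r ^ n) := by
  rw [le_div_iff₀ (by positivity)]
  calc a * (1 + r ^ n) ≤ (1 + R ^ n) * a := by rw [mul_comm]; gcongr
    _ ≤ C := h

section Cons

variable {m : ℕ}

lemma toLp_cons_eq_add_smul_single (s : ℝ) (y : EuclideanSpace ℝ (Fin m)) :
    (WithLp.toLp 2 (Fin.cons s (WithLp.ofLp y)) : EuclideanSpace ℝ (Fin (m + 1))) =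
      WithLp.toLp 2 (Fin.cons 0 (WithLp.ofLp y)) + s • EuclideanSpace.single 0 1 := by
  ext i
  cases i using Fin.cases <;> simp [Fin.succ_ne_zero]

lemma norm_toLp_cons_sq (s : ℝ) (y : EuclideanSpace ℝ (Fin m)) :
    ‖(WithLp.toLp 2 (Fin.cons s (WithLp.ofLp y)) : EuclideanSpace ℝ (Fin (m + 1)))‖ ^ 2 =
      s ^ 2 + ‖y‖ ^ 2 := by
  simp [EuclideanSpace.real_norm_sq_eq, Fin.sum_univ_succ]

lemma norm_le_norm_toLp_cons (s : ℝ) (y : EuclideanSpace ℝ (Fin m)) :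
    ‖y‖ ≤ ‖(WithLp.toLp 2 (Fin.cons s (WithLp.ofLp y)) : EuclideanSpace ℝ (Fin (m + 1)))‖ := by
  refine le_of_sq_le_sq ?_ (norm_nonneg _)
  rw [norm_toLp_cons_sq]
  nlinarith [sq_nonneg s]

end Cons

lemma abs_sub_le_of_gradient_decay {m n : ℕ} {f : EuclideanSpace ℝ (Fin (m + 1)) → ℝ}
    (hf : Differentiable ℝ f) {C : ℝ}
    (hgrad : ∀ x : EuclideanSpace ℝ (Fin (m + 1)), (1 + ‖x‖ ^ n) * ‖gradient f x‖ ≤ C)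
    (y : EuclideanSpace ℝ (Fin m)) (s₁ s₂ : ℝ) :
    |f (WithLp.toLp 2 (Fin.cons s₁ (WithLp.ofLp y))) -
        f (WithLp.toLp 2 (Fin.cons s₂ (WithLp.ofLp y)))| ≤
      C / (1 + ‖y‖ ^ n) * |s₁ - s₂| := by
  have hbound (t : ℝ) : ‖fderiv ℝ f (WithLp.toLp 2 (Fin.cons 0 (WithLp.ofLp y)) +
      t • EuclideanSpace.single 0 1)‖ ≤ C / (1 + ‖y‖ ^ n) := by
    rw [← toLp_cons_eq_add_smul_single, ← norm_gradient_eq_norm_fderiv]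
    exact le_div_one_add_pow_of_mul_le (norm_nonneg _) (norm_nonneg y)
      (norm_le_norm_toLp_cons t y) (hgrad _)
  simpa only [← toLp_cons_eq_add_smul_single, PiLp.norm_single, norm_one, mul_one,
    Real.norm_eq_abs] using norm_sub_le_of_norm_fderiv_le_on_line hf _ _ hbound s₁ s₂

theorem marginal_lipschitz_of_gradient_decay_general
    (m : ℕ)
    (f : EuclideanSpace ℝ (Fin (m + 1)) → ℝ)
    (hC1 : ContDiff ℝ 1 f)
    (C : ℝ)
    (hgrad : ∀ x : EuclideanSpace ℝ (Fin (m + 1)), (1 + ‖x‖ ^ (m + 1)) * ‖gradient f x‖ ≤ C)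
    (hslice : ∀ s : ℝ,
      Integrable (fun y : EuclideanSpace ℝ (Fin m) => f (WithLp.toLp 2 (Fin.cons s (WithLp.ofLp y))))) :
    Integrable (fun y : EuclideanSpace ℝ (Fin m) => C / (1 + ‖y‖ ^ (m + 1))) ∧
    ∀ s₁ s₂ : ℝ,
      |(∫ y : EuclideanSpace ℝ (Fin m), f (WithLp.toLp 2 (Fin.cons s₁ (WithLp.ofLp y)))) -
          ∫ y : EuclideanSpace ℝ (Fin m), f (WithLp.toLp 2 (Fin.cons s₂ (WithLp.ofLp y)))|
        ≤ (∫ y : EuclideanSpace ℝ (Fin m), C / (1 + ‖y‖ ^ (m + 1))) * |s₁ - s₂| := by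
  have hK : Integrable (fun y : EuclideanSpace ℝ (Fin m) => C / (1 + ‖y‖ ^ (m + 1))) := by
    simpa only [div_eq_mul_inv] using
      (integrable_inv_one_add_norm_pow volume (by simp)).const_mul C
  refine ⟨hK, fun s₁ s₂ => ?_⟩
  rw [← integral_sub (hslice s₁) (hslice s₂), ← integral_mul_const]
  exact norm_integral_le_of_norm_le (hK.mul_const _) (Filter.Eventually.of_forall fun y =>
    (Real.norm_eq_abs _).trans_le
      (abs_sub_le_of_gradient_decay (hC1.differentiable one_ne_zero) hgrad y s₁ s₂))

/-- for `d = m + 1 ≥ 2`, if `f : ℝ^d → ℝ` is `C¹`, integrable, with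
`(1 + ‖x‖^d)‖∇f(x)‖ ≤ C`, and every slice `y ↦ f(s, y)` is integrable, then the marginal
`f̄(s) = ∫ f(s, y) dy` is globally Lipschitz with constant `K = ∫ C/(1 + ‖y‖^d) dy`, and this
integral is finite. -/
theorem marginal_lipschitz_of_gradient_decay
    (m : ℕ) (hm : 1 ≤ m)
    (f : EuclideanSpace ℝ (Fin (m + 1)) → ℝ)
    (hC1 : ContDiff ℝ 1 f)
    (hint : Integrable f)
    (C : ℝ) (hC : 0 < C)
    (hgrad : ∀ x : EuclideanSpace ℝ (Fin (m + 1)), (1 + ‖x‖ ^ (m + 1)) * ‖gradient f x‖ ≤ C)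
    (hslice : ∀ s : ℝ,
      Integrable (fun y : EuclideanSpace ℝ (Fin m) => f (WithLp.toLp 2 (Fin.cons s (WithLp.ofLp y))))) :
    Integrable (fun y : EuclideanSpace ℝ (Fin m) => C / (1 + ‖y‖ ^ (m + 1))) ∧
    ∀ s₁ s₂ : ℝ,
      |(∫ y : EuclideanSpace ℝ (Fin m), f (WithLp.toLp 2 (Fin.cons s₁ (WithLp.ofLp y)))) -
          ∫ y : EuclideanSpace ℝ (Fin m), f (WithLp.toLp 2 (Fin.cons s₂ (WithLp.ofLp y)))|
        ≤ (∫ y : EuclideanSpace ℝ (Fin m), C / (1 + ‖y‖ ^ (m + 1))) * |s₁ - s₂| :=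
  marginal_lipschitz_of_gradient_decay_general m f hC1 C hgrad hslice
end
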